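/- arXiv:2003.03920 — 8 statements merged into one kernel-verified Lean document; each statement's English description precedes it below -/
import Mathlib

section
/- Let S_1,...,S_t be pairwise orthogonal frequency squares of type F(mλ;λ), and let T = Σ_{k=1}^t Σ_{a=2}^m I_a(S_k). Then the sum of all entries of T equals t(m−1)mλ², and the sum of squares of the entries of T equals t(m−1)λ²(t(m−1)+1). -/
open Finset

/-- `S` is a frequency square of type `F(mλ;λ)`: an `mλ × mλ` matrix with entries in
`{1,…,m}`, each symbol appearing exactly `λ` times in each row and each column. -/
def IsFS (m l : ℕ) (S : Matrix (Fin (m*l)) (Fin (m*l)) ℕ) : Prop :=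
  (∀ i j, S i j ∈ Finset.Icc 1 m) ∧
  (∀ (i : Fin (m*l)) (a : ℕ), a ∈ Finset.Icc 1 m →
    (Finset.univ.filter (fun j => S i j = a)).card = l) ∧
  (∀ (j : Fin (m*l)) (a : ℕ), a ∈ Finset.Icc 1 m →
    (Finset.univ.filter (fun i => S i j = a)).card = l)

/-- The indicator square `I_a(S)`. -/
def ind (m l : ℕ) (S : Matrix (Fin (m*l)) (Fin (m*l)) ℕ) (a : ℕ) :
    Matrix (Fin (m*l)) (Fin (m*l)) ℕ :=
  fun i j => if S i j = a then 1 else 0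

/-- Orthogonality of two frequency squares: each ordered symbol pair appears `λ²` times. -/
def Orth (m l : ℕ) (S S' : Matrix (Fin (m*l)) (Fin (m*l)) ℕ) : Prop :=
  ∀ a b : ℕ, a ∈ Finset.Icc 1 m → b ∈ Finset.Icc 1 m →
    (Finset.univ.filter
      (fun p : Fin (m*l) × Fin (m*l) => S p.1 p.2 = a ∧ S' p.1 p.2 = b)).card = l * l

/-- The set `{S 0, …, S (t-1)}` satisfies a non-constant full relation with respect to `x,y`. -/
def NCFR (m l t : ℕ) (S : Fin t → Matrix (Fin (m*l)) (Fin (m*l)) ℕ) (x y : ℕ) : Prop :=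
  x ≤ m*l ∧ y ≤ m*l ∧ ¬((x = 0 ∨ x = m*l) ∧ (y = 0 ∨ y = m*l)) ∧
  ∃ σ τ : Equiv.Perm (Fin (m*l)), ∀ i j : Fin (m*l),
    (∑ k, ind m l (S k) 1 (σ i) (τ j)) % 2 =
      (if ((i : ℕ) < x ↔ (j : ℕ) < y) then 0 else 1)

theorem stmt4 (m l t : ℕ) (hm : 2 ≤ m) (hl : 0 < l)
    (S : Fin t → Matrix (Fin (m*l)) (Fin (m*l)) ℕ)
    (hS : ∀ k, IsFS m l (S k))
    (horth : ∀ k k', k ≠ k' → Orth m l (S k) (S k')) :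
    (∑ i, ∑ j, ∑ k, ∑ a ∈ Finset.Icc 2 m, ind m l (S k) a i j)
        = t * (m-1) * m * l^2 ∧
    (∑ i, ∑ j, (∑ k, ∑ a ∈ Finset.Icc 2 m, ind m l (S k) a i j)^2)
        = t * (m-1) * l^2 * (t * (m-1) + 1) := by
  have hsub : ∀ a : ℕ, a ∈ Finset.Icc 2 m → a ∈ Finset.Icc 1 m := by
    intro a ha; simp [Finset.mem_Icc] at *; omega
  -- single-square count, over the product type
  have hA : ∀ k, ∑ p : Fin (m*l) × Fin (m*l), ∑ a ∈ Finset.Icc 2 m,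
      ind m l (S k) a p.1 p.2 = (m-1) * (m*l*l) := by
    intro k
    rw [Finset.sum_comm]
    have hcell : ∀ a ∈ Finset.Icc 2 m,
        ∑ p : Fin (m*l) × Fin (m*l), ind m l (S k) a p.1 p.2 = m*l*l := by
      intro a ha
      rw [Fintype.sum_prod_type]
      have hrow : ∀ i : Fin (m*l), ∑ j, ind m l (S k) a i j = l := by
        intro i
        have h2 := (hS k).2.1 i a (hsub a ha)
        rw [Finset.card_filter] at h2
        simpa [ind] using h2
      simp [hrow, Finset.card_univ, mul_assoc]
    rw [Finset.sum_congr rfl hcell]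
    simp [Nat.card_Icc, mul_comm]
  -- pairwise count
  have hB : ∀ k k', k ≠ k' →
      ∑ p : Fin (m*l) × Fin (m*l),
        (∑ a ∈ Finset.Icc 2 m, ind m l (S k) a p.1 p.2) *
        (∑ b ∈ Finset.Icc 2 m, ind m l (S k') b p.1 p.2)
      = (m-1) * ((m-1) * (l*l)) := by
    intro k k' hkk'
    have key : ∀ p : Fin (m*l) × Fin (m*l),
        (∑ a ∈ Finset.Icc 2 m, ind m l (S k) a p.1 p.2) *
        (∑ b ∈ Finset.Icc 2 m, ind m l (S k') b p.1 p.2)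
        = ∑ a ∈ Finset.Icc 2 m, ∑ b ∈ Finset.Icc 2 m,
            (if S k p.1 p.2 = a ∧ S k' p.1 p.2 = b then 1 else 0) := by
      intro p
      rw [Finset.sum_mul_sum]
      refine Finset.sum_congr rfl fun a _ => Finset.sum_congr rfl fun b _ => ?_
      simp only [ind, ite_and]
      by_cases h1 : S k p.1 p.2 = a <;> by_cases h2 : S k' p.1 p.2 = b <;> simp [h1, h2]
    rw [Finset.sum_congr rfl fun p _ => key p]
    rw [Finset.sum_comm]
    rw [Finset.sum_congr rfl fun a _ => Finset.sum_comm]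
    have hcnt : ∀ a ∈ Finset.Icc 2 m, ∀ b ∈ Finset.Icc 2 m,
        ∑ p : Fin (m*l) × Fin (m*l),
          (if S k p.1 p.2 = a ∧ S k' p.1 p.2 = b then 1 else 0) = l*l := by
      intro a ha b hb
      rw [← Finset.card_filter]
      exact horth k k' hkk' a b (hsub a ha) (hsub b hb)
    rw [Finset.sum_congr rfl fun a ha => Finset.sum_congr rfl (hcnt a ha)]
    simp [Nat.card_Icc]
  have hf01 : ∀ k (p : Fin (m*l) × Fin (m*l)),
      (∑ a ∈ Finset.Icc 2 m, ind m l (S k) a p.1 p.2) *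
      (∑ a ∈ Finset.Icc 2 m, ind m l (S k) a p.1 p.2)
      = ∑ a ∈ Finset.Icc 2 m, ind m l (S k) a p.1 p.2 := by
    intro k p
    have h1 : (∑ a ∈ Finset.Icc 2 m, ind m l (S k) a p.1 p.2)
        = if S k p.1 p.2 ∈ Finset.Icc 2 m then 1 else 0 := by
      simp [ind, Finset.sum_ite_eq']
    rw [h1]
    by_cases h : S k p.1 p.2 ∈ Finset.Icc 2 m <;> simp [h]
  constructor
  · have hsplit : (∑ i, ∑ j, ∑ k, ∑ a ∈ Finset.Icc 2 m, ind m l (S k) a i j)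
        = ∑ p : Fin (m*l) × Fin (m*l), ∑ k, ∑ a ∈ Finset.Icc 2 m,
            ind m l (S k) a p.1 p.2 := by
      rw [← Finset.sum_product', Finset.univ_product_univ]
    rw [hsplit, Finset.sum_comm]
    rw [Finset.sum_congr rfl fun k _ => hA k]
    simp [Finset.card_univ]; ring
  · have expand : ∀ p : Fin (m*l) × Fin (m*l),
        (∑ k, ∑ a ∈ Finset.Icc 2 m, ind m l (S k) a p.1 p.2)^2
        = ∑ k, ∑ k', (∑ a ∈ Finset.Icc 2 m, ind m l (S k) a p.1 p.2) *
            (∑ b ∈ Finset.Icc 2 m, ind m l (S k') b p.1 p.2) := by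
      intro p; rw [sq, Finset.sum_mul_sum]
    have hsplit : (∑ i, ∑ j, (∑ k, ∑ a ∈ Finset.Icc 2 m, ind m l (S k) a i j)^2)
        = ∑ p : Fin (m*l) × Fin (m*l),
            (∑ k, ∑ a ∈ Finset.Icc 2 m, ind m l (S k) a p.1 p.2)^2 := by
      rw [← Finset.sum_product', Finset.univ_product_univ]
    rw [hsplit, Finset.sum_congr rfl fun p _ => expand p]
    rw [Finset.sum_comm]
    rw [Finset.sum_congr rfl fun k _ => Finset.sum_comm]
    -- now: ∑ k, ∑ k', ∑ p, f k p * f k' p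
    have diag : ∀ k : Fin t, ∑ k', ∑ p : Fin (m*l) × Fin (m*l),
        (∑ a ∈ Finset.Icc 2 m, ind m l (S k) a p.1 p.2) *
          (∑ b ∈ Finset.Icc 2 m, ind m l (S k') b p.1 p.2)
        = (m-1)*(m*l*l) + (t-1) * ((m-1)*((m-1)*(l*l))) := by
      intro k
      rw [← Finset.add_sum_erase _ _ (Finset.mem_univ k)]
      congr 1
      · rw [Finset.sum_congr rfl fun p _ => hf01 k p]
        exact hA k
      · have h3 : ∀ k' ∈ Finset.univ.erase k, ∑ p : Fin (m*l) × Fin (m*l),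
            (∑ a ∈ Finset.Icc 2 m, ind m l (S k) a p.1 p.2) *
              (∑ b ∈ Finset.Icc 2 m, ind m l (S k') b p.1 p.2)
            = (m-1)*((m-1)*(l*l)) := by
          intro k' hk'
          exact hB k k' (Ne.symm (Finset.ne_of_mem_erase hk'))
        rw [Finset.sum_congr rfl h3]
        simp [Finset.card_erase_of_mem, Finset.card_univ]
    rw [Finset.sum_congr rfl fun k _ => diag k]
    simp only [Finset.sum_const, Finset.card_univ, Fintype.card_fin, smul_eq_mul]
    rcases Nat.eq_zero_or_pos t with ht | ht
    · subst ht; simp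
    · obtain ⟨t', rfl⟩ : ∃ t', t = t' + 1 := ⟨t-1, by omega⟩
      obtain ⟨m', rfl⟩ : ∃ m', m = m' + 2 := ⟨m-2, by omega⟩
      simp only [Nat.add_sub_cancel, show m' + 2 - 1 = m' + 1 from rfl]
      ring
end

section
/- If S_1,...,S_t are pairwise orthogonal frequency squares of type F(mλ;λ) with m ≥ 2, then t ≤ (mλ−1)²/(m−1). -/
open Finset

noncomputable section MOFSAux

open Finset

/-- Dot product of two grid functions. -/
def gdot (n : ℕ) (u v : Fin n × Fin n → ℝ) : ℝ := ∑ p : Fin n × Fin n, u p * v p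

/-- Centered (scaled) indicator vector of symbol `c+1` in square `S k`. -/
def vecW (m l t : ℕ) (S : Fin t → Matrix (Fin (m*l)) (Fin (m*l)) ℕ)
    (k : Fin t) (c : Fin (m-1)) : Fin (m*l) × Fin (m*l) → ℝ :=
  fun p => ((m*l : ℕ) : ℝ) * (if S k p.1 p.2 = (c : ℕ) + 1 then (1:ℝ) else 0) - (l : ℝ)

def vecR (n : ℕ) (i : Fin n) : Fin n × Fin n → ℝ := fun p => if p.1 = i then 1 else 0

def vecC (n : ℕ) (j : ℕ) : Fin n × Fin n → ℝ := fun p => if (p.2 : ℕ) = j then 1 else 0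

/-- The combined family of vectors. -/
def Fam (m l t : ℕ) (S : Fin t → Matrix (Fin (m*l)) (Fin (m*l)) ℕ) :
    (Fin t × Fin (m-1)) ⊕ (Fin (m*l) ⊕ Fin (m*l-1)) → (Fin (m*l) × Fin (m*l) → ℝ)
  | Sum.inl kc => vecW m l t S kc.1 kc.2
  | Sum.inr (Sum.inl i) => vecR (m*l) i
  | Sum.inr (Sum.inr j) => vecC (m*l) (j : ℕ)

variable {m l t : ℕ}

lemma symb_mem (hm : 2 ≤ m) (c : Fin (m-1)) : (c : ℕ) + 1 ∈ Finset.Icc 1 m := by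
  have := c.isLt
  simp only [Finset.mem_Icc]
  omega

lemma sum_row {S0 : Matrix (Fin (m*l)) (Fin (m*l)) ℕ} (h : IsFS m l S0)
    (i : Fin (m*l)) {a : ℕ} (ha : a ∈ Finset.Icc 1 m) :
    ∑ j, (if S0 i j = a then (1:ℝ) else 0) = (l : ℝ) := by
  rw [Finset.sum_boole]
  exact_mod_cast h.2.1 i a ha

lemma sum_col {S0 : Matrix (Fin (m*l)) (Fin (m*l)) ℕ} (h : IsFS m l S0)
    (j : Fin (m*l)) {a : ℕ} (ha : a ∈ Finset.Icc 1 m) :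
    ∑ i, (if S0 i j = a then (1:ℝ) else 0) = (l : ℝ) := by
  rw [Finset.sum_boole]
  exact_mod_cast h.2.2 j a ha

lemma sum_total {S0 : Matrix (Fin (m*l)) (Fin (m*l)) ℕ} (h : IsFS m l S0)
    {a : ℕ} (ha : a ∈ Finset.Icc 1 m) :
    ∑ p : Fin (m*l) × Fin (m*l), (if S0 p.1 p.2 = a then (1:ℝ) else 0)
      = ((m*l : ℕ) : ℝ) * (l : ℝ) := by
  rw [Fintype.sum_prod_type]
  rw [Finset.sum_congr rfl (fun i _ => sum_row h i ha)]
  simp [Finset.sum_const, nsmul_eq_mul]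

lemma sum_pair_orth {A B : Matrix (Fin (m*l)) (Fin (m*l)) ℕ} (h : Orth m l A B)
    {a b : ℕ} (ha : a ∈ Finset.Icc 1 m) (hb : b ∈ Finset.Icc 1 m) :
    ∑ p : Fin (m*l) × Fin (m*l),
      (if A p.1 p.2 = a then (1:ℝ) else 0) * (if B p.1 p.2 = b then (1:ℝ) else 0)
      = (l : ℝ) * (l : ℝ) := by
  have : ∀ p : Fin (m*l) × Fin (m*l),
      (if A p.1 p.2 = a then (1:ℝ) else 0) * (if B p.1 p.2 = b then (1:ℝ) else 0)
        = if A p.1 p.2 = a ∧ B p.1 p.2 = b then (1:ℝ) else 0 := by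
    intro p
    by_cases h1 : A p.1 p.2 = a <;> by_cases h2 : B p.1 p.2 = b <;> simp [h1, h2]
  rw [Finset.sum_congr rfl (fun p _ => this p), Finset.sum_boole]
  exact_mod_cast h a b ha hb

lemma sum_pair_same_diff {A : Matrix (Fin (m*l)) (Fin (m*l)) ℕ}
    {a b : ℕ} (hab : a ≠ b) :
    ∑ p : Fin (m*l) × Fin (m*l),
      (if A p.1 p.2 = a then (1:ℝ) else 0) * (if A p.1 p.2 = b then (1:ℝ) else 0) = 0 := by
  apply Finset.sum_eq_zero
  intro p _
  by_cases h1 : A p.1 p.2 = a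
  · have h2 : A p.1 p.2 ≠ b := fun h2 => hab (h1.symm.trans h2)
    simp [h1, h2, hab]
  · simp [h1]

lemma sum_pair_same_same {A : Matrix (Fin (m*l)) (Fin (m*l)) ℕ} (h : IsFS m l A)
    {a : ℕ} (ha : a ∈ Finset.Icc 1 m) :
    ∑ p : Fin (m*l) × Fin (m*l),
      (if A p.1 p.2 = a then (1:ℝ) else 0) * (if A p.1 p.2 = a then (1:ℝ) else 0)
      = ((m*l : ℕ) : ℝ) * (l : ℝ) := by
  have : ∀ p : Fin (m*l) × Fin (m*l),
      (if A p.1 p.2 = a then (1:ℝ) else 0) * (if A p.1 p.2 = a then (1:ℝ) else 0)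
        = if A p.1 p.2 = a then (1:ℝ) else 0 := by
    intro p; by_cases h1 : A p.1 p.2 = a <;> simp [h1]
  rw [Finset.sum_congr rfl (fun p _ => this p)]
  exact sum_total h ha

section Dots

variable (hm : 2 ≤ m) (hl : 0 < l) {S : Fin t → Matrix (Fin (m*l)) (Fin (m*l)) ℕ}
  (hS : ∀ k, IsFS m l (S k))
  (horth : ∀ k k', k ≠ k' → Orth m l (S k) (S k'))

include hm hS

lemma dot_W_W (horth : ∀ k k', k ≠ k' → Orth m l (S k) (S k'))
    (k k' : Fin t) (c c' : Fin (m-1)) :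
    gdot (m*l) (vecW m l t S k c) (vecW m l t S k' c') =
      if k = k' then
        (if c = c' then ((m:ℝ)*l)^2 * (l:ℝ)^2 * ((m:ℝ)-1) else -(((m:ℝ)*l)^2 * (l:ℝ)^2))
      else 0 := by
  classical
  set n : ℝ := ((m*l : ℕ) : ℝ) with hn
  have hnval : n = (m:ℝ) * (l:ℝ) := by rw [hn]; push_cast; ring
  unfold gdot vecW
  have expand : ∀ p : Fin (m*l) × Fin (m*l),
      (n * (if S k p.1 p.2 = (c:ℕ)+1 then (1:ℝ) else 0) - (l:ℝ)) *
        (n * (if S k' p.1 p.2 = (c':ℕ)+1 then (1:ℝ) else 0) - (l:ℝ)) =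
      n^2 * ((if S k p.1 p.2 = (c:ℕ)+1 then (1:ℝ) else 0) *
              (if S k' p.1 p.2 = (c':ℕ)+1 then (1:ℝ) else 0))
        - n * (l:ℝ) * (if S k p.1 p.2 = (c:ℕ)+1 then (1:ℝ) else 0)
        - n * (l:ℝ) * (if S k' p.1 p.2 = (c':ℕ)+1 then (1:ℝ) else 0)
        + (l:ℝ)^2 := by
    intro p; ring
  rw [Finset.sum_congr rfl (fun p _ => expand p)]
  rw [Finset.sum_add_distrib, Finset.sum_sub_distrib, Finset.sum_sub_distrib,
    ← Finset.mul_sum, ← Finset.mul_sum, ← Finset.mul_sum,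
    Finset.sum_const, Finset.card_univ, Fintype.card_prod, Fintype.card_fin,
    sum_total (hS k) (symb_mem hm c), sum_total (hS k') (symb_mem hm c')]
  by_cases hk : k = k'
  · subst hk
    by_cases hc : c = c'
    · subst hc
      rw [sum_pair_same_same (hS k) (symb_mem hm c), if_pos rfl, if_pos rfl]
      rw [hnval] at *
      push_cast
      ring
    · have hab : (c:ℕ) + 1 ≠ (c':ℕ) + 1 := by
        intro h; exact hc (Fin.ext (by omega))
      rw [sum_pair_same_diff hab, if_pos rfl, if_neg hc]
      rw [hnval] at *
      push_cast
      ring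
  · rw [sum_pair_orth (horth k k' hk) (symb_mem hm c) (symb_mem hm c'), if_neg hk]
    rw [hnval] at *
    push_cast
    ring

lemma dot_R_W (i : Fin (m*l)) (k : Fin t) (c : Fin (m-1)) :
    gdot (m*l) (vecR (m*l) i) (vecW m l t S k c) = 0 := by
  classical
  unfold gdot vecR vecW
  rw [Fintype.sum_prod_type]
  have step : ∀ i' : Fin (m*l),
      (∑ j, (if (i', j).1 = i then (1:ℝ) else 0) *
        (((m*l : ℕ):ℝ) * (if S k (i', j).1 (i', j).2 = (c:ℕ)+1 then (1:ℝ) else 0) - (l:ℝ)))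
      = if i' = i then
          (∑ j, (((m*l : ℕ):ℝ) * (if S k i' j = (c:ℕ)+1 then (1:ℝ) else 0) - (l:ℝ))) else 0 := by
    intro i'
    by_cases h : i' = i <;> simp [h]
  rw [Finset.sum_congr rfl (fun i' _ => step i'), Finset.sum_ite_eq' Finset.univ i,
    if_pos (Finset.mem_univ i)]
  rw [Finset.sum_sub_distrib, ← Finset.mul_sum, sum_row (hS k) i (symb_mem hm c),
    Finset.sum_const, Finset.card_univ, Fintype.card_fin]
  push_cast
  ring

lemma dot_C_W (j : Fin (m*l)) (k : Fin t) (c : Fin (m-1)) :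
    gdot (m*l) (vecC (m*l) (j : ℕ)) (vecW m l t S k c) = 0 := by
  classical
  unfold gdot vecC vecW
  rw [Fintype.sum_prod_type, Finset.sum_comm]
  have step : ∀ j' : Fin (m*l),
      (∑ i, (if ((i, j').2 : ℕ) = (j : ℕ) then (1:ℝ) else 0) *
        (((m*l : ℕ):ℝ) * (if S k (i, j').1 (i, j').2 = (c:ℕ)+1 then (1:ℝ) else 0) - (l:ℝ)))
      = if j' = j then
          (∑ i, (((m*l : ℕ):ℝ) * (if S k i j' = (c:ℕ)+1 then (1:ℝ) else 0) - (l:ℝ))) else 0 := by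
    intro j'
    by_cases h : j' = j
    · simp [h]
    · have : ((j' : ℕ) = (j : ℕ)) = False := by
        simp only [eq_iff_iff, iff_false]
        exact fun hv => h (Fin.ext hv)
      simp [this, h]
  rw [Finset.sum_congr rfl (fun j' _ => step j'), Finset.sum_ite_eq' Finset.univ j,
    if_pos (Finset.mem_univ j)]
  rw [Finset.sum_sub_distrib, ← Finset.mul_sum, sum_col (hS k) j (symb_mem hm c),
    Finset.sum_const, Finset.card_univ, Fintype.card_fin]
  push_cast
  ring

end Dots

lemma fam_indep (hm : 2 ≤ m) (hl : 0 < l)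
    {S : Fin t → Matrix (Fin (m*l)) (Fin (m*l)) ℕ}
    (hS : ∀ k, IsFS m l (S k))
    (horth : ∀ k k', k ≠ k' → Orth m l (S k) (S k')) :
    LinearIndependent ℝ (Fam m l t S) := by
  classical
  have hn2 : 2 ≤ m * l := by nlinarith
  rw [Fintype.linearIndependent_iff]
  intro g hg
  have h0 : ∀ p : Fin (m*l) × Fin (m*l), (∑ i, g i * Fam m l t S i p) = 0 := by
    intro p
    have := congrFun hg p
    simpa [Finset.sum_apply] using this
  have key : ∀ u : Fin (m*l) × Fin (m*l) → ℝ,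
      (∑ i, g i * gdot (m*l) (Fam m l t S i) u) = 0 := by
    intro u
    calc ∑ i, g i * gdot (m*l) (Fam m l t S i) u
        = ∑ i, ∑ p : Fin (m*l) × Fin (m*l), g i * (Fam m l t S i p * u p) := by
          simp [gdot, Finset.mul_sum]
      _ = ∑ p : Fin (m*l) × Fin (m*l), ∑ i, g i * (Fam m l t S i p * u p) :=
          Finset.sum_comm
      _ = ∑ p : Fin (m*l) × Fin (m*l), (∑ i, g i * Fam m l t S i p) * u p := by
          refine Finset.sum_congr rfl fun p _ => ?_
          rw [Finset.sum_mul]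
          exact Finset.sum_congr rfl fun i _ => (mul_assoc _ _ _).symm
      _ = 0 := by
          refine Finset.sum_eq_zero fun p _ => ?_
          rw [h0 p, zero_mul]
  -- constants
  set B : ℝ := ((m:ℝ)*l)^2 * (l:ℝ)^2 with hB
  have hBpos : 0 < B := by
    have hm' : (0:ℝ) < m := by positivity
    have hl' : (0:ℝ) < l := by exact_mod_cast hl
    positivity
  -- Step B : W coefficients vanish
  have hmain : ∀ (k : Fin t) (c : Fin (m-1)),
      (m : ℝ) * g (Sum.inl (k, c)) = ∑ c' : Fin (m-1), g (Sum.inl (k, c')) := by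
    intro k c
    have h := key (vecW m l t S k c)
    rw [Fintype.sum_sum_type, Fintype.sum_sum_type] at h
    have hR0 : (∑ i, g (Sum.inr (Sum.inl i)) *
        gdot (m*l) (Fam m l t S (Sum.inr (Sum.inl i))) (vecW m l t S k c)) = 0 := by
      refine Finset.sum_eq_zero fun i _ => ?_
      show g _ * gdot (m*l) (vecR (m*l) i) (vecW m l t S k c) = 0
      rw [dot_R_W hm hS, mul_zero]
    have hC0 : (∑ j : Fin (m*l-1), g (Sum.inr (Sum.inr j)) *
        gdot (m*l) (Fam m l t S (Sum.inr (Sum.inr j))) (vecW m l t S k c)) = 0 := by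
      refine Finset.sum_eq_zero fun j _ => ?_
      show g _ * gdot (m*l) (vecC (m*l) (j:ℕ)) (vecW m l t S k c) = 0
      have hj : (j : ℕ) < m * l := by have := j.isLt; omega
      have : vecC (m*l) (j:ℕ) = vecC (m*l) ((⟨(j:ℕ), hj⟩ : Fin (m*l)) : ℕ) := rfl
      rw [this, dot_C_W hm hS, mul_zero]
    rw [hR0, hC0, add_zero, add_zero] at h
    rw [Fintype.sum_prod_type] at h
    have hW : ∀ k' : Fin t,
        (∑ c' : Fin (m-1), g (Sum.inl (k', c')) *
          gdot (m*l) (Fam m l t S (Sum.inl (k', c'))) (vecW m l t S k c))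
        = if k' = k then
            (∑ c' : Fin (m-1), g (Sum.inl (k, c')) * (if c' = c then B*((m:ℝ)-1) else -B)) else 0 := by
      intro k'
      by_cases hk : k' = k
      · subst hk
        rw [if_pos rfl]
        refine Finset.sum_congr rfl fun c' _ => ?_
        show g _ * gdot (m*l) (vecW m l t S k' c') (vecW m l t S k' c) = _
        by_cases hc : c' = c
        · rw [dot_W_W hm hS horth, if_pos rfl, if_pos hc]
        · rw [dot_W_W hm hS horth, if_pos rfl, if_neg hc]
      · rw [if_neg hk]
        refine Finset.sum_eq_zero fun c' _ => ?_
        show g _ * gdot (m*l) (vecW m l t S k' c') (vecW m l t S k c) = 0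
        rw [dot_W_W hm hS horth, if_neg hk, mul_zero]
    rw [Finset.sum_congr rfl (fun k' _ => hW k'), Finset.sum_ite_eq' Finset.univ k,
      if_pos (Finset.mem_univ k)] at h
    have split : ∀ c' : Fin (m-1),
        g (Sum.inl (k, c')) * (if c' = c then B*((m:ℝ)-1) else -B)
          = (if c' = c then g (Sum.inl (k, c')) * (B * (m:ℝ)) else 0)
              - g (Sum.inl (k, c')) * B := by
      intro c'
      by_cases hc : c' = c
      · rw [if_pos hc, if_pos hc]; ring
      · rw [if_neg hc, if_neg hc]; ring
    rw [Finset.sum_congr rfl (fun c' _ => split c'), Finset.sum_sub_distrib,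
      Finset.sum_ite_eq' Finset.univ c, if_pos (Finset.mem_univ c),
      ← Finset.sum_mul, sub_eq_zero] at h
    have h' : ((m:ℝ) * g (Sum.inl (k, c))) * B = (∑ c' : Fin (m-1), g (Sum.inl (k, c'))) * B := by
      rw [← h]; ring
    exact mul_right_cancel₀ (ne_of_gt hBpos) h' 
  have hWzero : ∀ (k : Fin t) (c : Fin (m-1)), g (Sum.inl (k, c)) = 0 := by
    intro k c
    have hT : (∑ c' : Fin (m-1), g (Sum.inl (k, c'))) = 0 := by
      have hsum : (m:ℝ) * (∑ c' : Fin (m-1), g (Sum.inl (k, c')))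
          = ∑ c' : Fin (m-1), ((m:ℝ) * g (Sum.inl (k, c'))) := by
        rw [Finset.mul_sum]
      rw [Finset.sum_congr rfl (fun c' _ => hmain k c')] at hsum
      rw [Finset.sum_const, Finset.card_univ, Fintype.card_fin] at hsum
      have hcast : ((m - 1 : ℕ) : ℝ) = (m:ℝ) - 1 := by
        push_cast [Nat.cast_sub (by omega : 1 ≤ m)]; ring
      rw [nsmul_eq_mul, hcast] at hsum
      nlinarith [hsum]
    have := hmain k c
    rw [hT] at this
    have hm0 : (m:ℝ) ≠ 0 := by positivity
    exact (mul_eq_zero.mp this).resolve_left hm0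
  -- Step C
  have hpt : ∀ p : Fin (m*l) × Fin (m*l),
      (∑ i : Fin (m*l), g (Sum.inr (Sum.inl i)) * vecR (m*l) i p)
        + (∑ j : Fin (m*l-1), g (Sum.inr (Sum.inr j)) * vecC (m*l) (j:ℕ) p) = 0 := by
    intro p
    have := h0 p
    rw [Fintype.sum_sum_type, Fintype.sum_sum_type] at this
    have hWz : (∑ kc : Fin t × Fin (m-1),
        g (Sum.inl kc) * Fam m l t S (Sum.inl kc) p) = 0 := by
      refine Finset.sum_eq_zero fun kc _ => ?_
      rw [show g (Sum.inl kc) = 0 from hWzero kc.1 kc.2, zero_mul]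
    rw [hWz, zero_add] at this
    exact this
  have hlast : m*l - 1 < m*l := by omega
  have hRzero : ∀ i : Fin (m*l), g (Sum.inr (Sum.inl i)) = 0 := by
    intro i
    have := hpt (i, ⟨m*l - 1, hlast⟩)
    have hC : (∑ j : Fin (m*l-1), g (Sum.inr (Sum.inr j)) * vecC (m*l) (j:ℕ) (i, ⟨m*l - 1, hlast⟩)) = 0 := by
      refine Finset.sum_eq_zero fun j _ => ?_
      have hj : (((⟨m*l - 1, hlast⟩ : Fin (m*l)) : ℕ) = (j : ℕ)) = False := by
        simp only [eq_iff_iff, iff_false]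
        have := j.isLt
        show ¬ (m*l - 1 = (j:ℕ))
        omega
      simp [vecC, hj]
    rw [hC, add_zero] at this
    have hR : (∑ i' : Fin (m*l), g (Sum.inr (Sum.inl i')) * vecR (m*l) i' (i, ⟨m*l - 1, hlast⟩))
        = g (Sum.inr (Sum.inl i)) := by
      have : ∀ i' : Fin (m*l), g (Sum.inr (Sum.inl i')) * vecR (m*l) i' (i, ⟨m*l - 1, hlast⟩)
          = if i' = i then g (Sum.inr (Sum.inl i')) else 0 := by
        intro i'
        by_cases h : i' = i
        · simp [vecR, h]
        · have : (i = i') = False := by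
            simp only [eq_iff_iff, iff_false]; exact fun hh => h hh.symm
          simp [vecR, this, h]
      rw [Finset.sum_congr rfl (fun i' _ => this i'), Finset.sum_ite_eq' Finset.univ i,
        if_pos (Finset.mem_univ i)]
    rw [hR] at this
    exact this
  have hCzero : ∀ j : Fin (m*l-1), g (Sum.inr (Sum.inr j)) = 0 := by
    intro j
    have hj : (j : ℕ) < m*l := by have := j.isLt; omega
    have := hpt (⟨0, by omega⟩, ⟨(j:ℕ), hj⟩)
    have hR : (∑ i : Fin (m*l), g (Sum.inr (Sum.inl i)) *
        vecR (m*l) i (⟨0, by omega⟩, ⟨(j:ℕ), hj⟩)) = 0 := by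
      refine Finset.sum_eq_zero fun i _ => ?_
      rw [hRzero i, zero_mul]
    rw [hR, zero_add] at this
    have hC : (∑ j' : Fin (m*l-1), g (Sum.inr (Sum.inr j')) *
        vecC (m*l) (j':ℕ) (⟨0, by omega⟩, ⟨(j:ℕ), hj⟩)) = g (Sum.inr (Sum.inr j)) := by
      have : ∀ j' : Fin (m*l-1), g (Sum.inr (Sum.inr j')) *
          vecC (m*l) (j':ℕ) (⟨0, by omega⟩, ⟨(j:ℕ), hj⟩)
          = if j' = j then g (Sum.inr (Sum.inr j')) else 0 := by
        intro j'
        by_cases h : j' = j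
        · simp [vecC, h]
        · have hv : ((j:ℕ) = (j':ℕ)) = False := by
            simp only [eq_iff_iff, iff_false]
            exact fun hh => h (Fin.ext hh.symm)
          simp [vecC, hv, h]
      rw [Finset.sum_congr rfl (fun j' _ => this j'), Finset.sum_ite_eq' Finset.univ j,
        if_pos (Finset.mem_univ j)]
    rw [hC] at this
    exact this
  rintro (⟨k, c⟩ | i | j)
  · exact hWzero k c
  · exact hRzero i
  · exact hCzero j

end MOFSAux

theorem stmt6 (m l t : ℕ) (hm : 2 ≤ m) (hl : 0 < l)
    (S : Fin t → Matrix (Fin (m*l)) (Fin (m*l)) ℕ)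
    (hS : ∀ k, IsFS m l (S k))
    (horth : ∀ k k', k ≠ k' → Orth m l (S k) (S k')) :
    (t : ℝ) ≤ ((m : ℝ) * l - 1)^2 / ((m : ℝ) - 1) := by
  have hn2 : 2 ≤ m * l := by nlinarith
  have hcard := (fam_indep hm hl hS horth).fintype_card_le_finrank
  rw [Module.finrank_fintype_fun_eq_card] at hcard
  simp only [Fintype.card_sum, Fintype.card_prod, Fintype.card_fin] at hcard
  -- hcard : t * (m-1) + (m*l + (m*l - 1)) ≤ m*l * (m*l)
  have hmpos : (0:ℝ) < (m:ℝ) - 1 := by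
    have : (2:ℝ) ≤ (m:ℝ) := by exact_mod_cast hm
    linarith
  rw [le_div_iff₀ hmpos]
  have hcast : ((t * (m-1) + (m*l + (m*l - 1)) : ℕ) : ℝ) ≤ ((m*l * (m*l) : ℕ) : ℝ) := by
    exact_mod_cast hcard
  push_cast [Nat.cast_sub (by omega : 1 ≤ m), Nat.cast_sub (by omega : 1 ≤ m*l)] at hcast
  nlinarith [hcast]
end

section
/- Let S_1,...,S_t be pairwise orthogonal frequency squares of type F(mλ;λ) with (S_k)_{11}=1 for all k, and suppose t = (mλ−1)²/(m−1). Then the array T = Σ_k Σ_{a>1} I_a(S_k) satisfies: T_{11}=0; T_{i1}=T_{1j}=λ(mλ−1) for all i,j>1; and T_{ij}=λ(mλ−2) for all i,j>1. -/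
open Finset

theorem stmt7 (m l t : ℕ) (hm : 2 ≤ m) (hl : 0 < l) (hpos : 0 < m*l)
    (S : Fin t → Matrix (Fin (m*l)) (Fin (m*l)) ℕ)
    (hS : ∀ k, IsFS m l (S k))
    (horth : ∀ k k', k ≠ k' → Orth m l (S k) (S k'))
    (h11 : ∀ k, S k ⟨0, hpos⟩ ⟨0, hpos⟩ = 1)
    (ht : t * (m - 1) = (m*l - 1)^2) :
    (∑ k, ∑ a ∈ Finset.Icc 2 m, ind m l (S k) a ⟨0, hpos⟩ ⟨0, hpos⟩) = 0 ∧
    (∀ i : Fin (m*l), i ≠ ⟨0, hpos⟩ →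
      (∑ k, ∑ a ∈ Finset.Icc 2 m, ind m l (S k) a i ⟨0, hpos⟩) = l * (m*l - 1) ∧
      (∑ k, ∑ a ∈ Finset.Icc 2 m, ind m l (S k) a ⟨0, hpos⟩ i) = l * (m*l - 1)) ∧
    (∀ i j : Fin (m*l), i ≠ ⟨0, hpos⟩ → j ≠ ⟨0, hpos⟩ →
      (∑ k, ∑ a ∈ Finset.Icc 2 m, ind m l (S k) a i j) = l * (m*l - 2)) := by
  set z : Fin (m*l) := (⟨0, hpos⟩ : Fin (m*l)) with hzdef
  have hq1 : 1 ≤ m * l := hpos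
  have hq2 : 2 ≤ m * l := le_trans hm (Nat.le_mul_of_pos_right m hl)
  have h1m : (1:ℕ) ∈ Finset.Icc 1 m := by simp only [Finset.mem_Icc]; omega
  -- the symbol sum over a ∈ [2,m] is an indicator of "entry ≠ 1"
  have hind : ∀ (k : Fin t) (i j : Fin (m*l)),
      (∑ a ∈ Finset.Icc 2 m, ind m l (S k) a i j) = if S k i j = 1 then 0 else 1 := by
    intro k i j
    have hmem := (hS k).1 i j
    simp only [Finset.mem_Icc] at hmem
    unfold ind
    rw [Finset.sum_ite_eq]
    simp only [Finset.mem_Icc]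
    split_ifs <;> omega
  set N : Fin (m*l) → Fin (m*l) → ℤ :=
    fun i j => ∑ k, (if S k i j = 1 then (1:ℤ) else 0) with hNdef
  set δ : Fin (m*l) → ℤ := fun i => if i = z then (1:ℤ) else 0 with hddef
  have hdel : ∀ f : Fin (m*l) → ℤ, (∑ i, δ i * f i) = f z := by
    intro f
    simp only [hddef, ite_mul, one_mul, zero_mul, Finset.sum_ite_eq', Finset.mem_univ, if_true]
  have hdsum : (∑ i, δ i) = 1 := by simp [hddef]
  have hrow : ∀ (k : Fin t) (i : Fin (m*l)),
      (∑ j, (if S k i j = 1 then (1:ℤ) else 0)) = l := by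
    intro k i
    have h := (hS k).2.1 i 1 h1m
    have h2 : (∑ j, (if S k i j = 1 then (1:ℤ) else 0))
        = (((Finset.univ.filter (fun j => S k i j = 1)).card : ℕ) : ℤ) := by
      rw [Finset.card_filter]; push_cast; rfl
    rw [h2, h]
  have hcol : ∀ (k : Fin t) (j : Fin (m*l)),
      (∑ i, (if S k i j = 1 then (1:ℤ) else 0)) = l := by
    intro k j
    have h := (hS k).2.2 j 1 h1m
    have h2 : (∑ i, (if S k i j = 1 then (1:ℤ) else 0))
        = (((Finset.univ.filter (fun i => S k i j = 1)).card : ℕ) : ℤ) := by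
      rw [Finset.card_filter]; push_cast; rfl
    rw [h2, h]
  have hNrow : ∀ i, (∑ j, N i j) = (t:ℤ) * l := by
    intro i
    calc (∑ j, N i j) = ∑ k, ∑ j, (if S k i j = 1 then (1:ℤ) else 0) := Finset.sum_comm
      _ = ∑ _k : Fin t, (l:ℤ) := Finset.sum_congr rfl fun k _ => hrow k i
      _ = (t:ℤ) * l := by simp [Finset.sum_const, Finset.card_univ, mul_comm]
  have hNcol : ∀ j, (∑ i, N i j) = (t:ℤ) * l := by
    intro j
    calc (∑ i, N i j) = ∑ k, ∑ i, (if S k i j = 1 then (1:ℤ) else 0) := Finset.sum_comm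
      _ = ∑ _k : Fin t, (l:ℤ) := Finset.sum_congr rfl fun k _ => hcol k j
      _ = (t:ℤ) * l := by simp [Finset.sum_const, Finset.card_univ, mul_comm]
  have hN00 : N z z = (t:ℤ) := by
    simp [hNdef, h11, Finset.card_univ]
  have hNsum : (∑ i, ∑ j, N i j) = ((m:ℤ)*l) * ((t:ℤ)*l) := by
    rw [Finset.sum_congr rfl fun i _ => hNrow i]
    simp only [Finset.sum_const, Finset.card_univ, Fintype.card_fin, smul_eq_mul, nsmul_eq_mul]
    push_cast <;> ring
  -- pair counts
  have hpairEq : ∀ k : Fin t,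
      (∑ i, ∑ j, (if S k i j = 1 then (1:ℤ) else 0) * (if S k i j = 1 then (1:ℤ) else 0))
        = ((m:ℤ)*l) * l := by
    intro k
    have he : ∀ i j : Fin (m*l),
        (if S k i j = 1 then (1:ℤ) else 0) * (if S k i j = 1 then (1:ℤ) else 0)
          = (if S k i j = 1 then (1:ℤ) else 0) := by
      intro i j; split_ifs <;> ring
    simp only [he]
    rw [Finset.sum_congr rfl fun i _ => hrow k i]
    simp only [Finset.sum_const, Finset.card_univ, Fintype.card_fin, smul_eq_mul, nsmul_eq_mul]
    push_cast <;> ring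
  have hpairNe : ∀ k k' : Fin t, k ≠ k' →
      (∑ i, ∑ j, (if S k i j = 1 then (1:ℤ) else 0) * (if S k' i j = 1 then (1:ℤ) else 0))
        = (l:ℤ) * l := by
    intro k k' hkk
    have h := horth k k' hkk 1 1 h1m h1m
    have he : ∀ i j : Fin (m*l),
        (if S k i j = 1 then (1:ℤ) else 0) * (if S k' i j = 1 then (1:ℤ) else 0)
          = if (fun p : Fin (m*l) × Fin (m*l) => S k p.1 p.2 = 1 ∧ S k' p.1 p.2 = 1) (i, j)
              then (1:ℤ) else 0 := by
      intro i j
      by_cases h1 : S k i j = 1 <;> by_cases h2 : S k' i j = 1 <;> simp [h1, h2]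
    simp only [he]
    rw [← Finset.sum_product']
    rw [show (univ ×ˢ univ : Finset (Fin (m*l) × Fin (m*l))) = univ from by simp]
    have h2 : (∑ p : Fin (m*l) × Fin (m*l),
        if (fun p : Fin (m*l) × Fin (m*l) => S k p.1 p.2 = 1 ∧ S k' p.1 p.2 = 1) p
          then (1:ℤ) else 0)
        = (((Finset.univ.filter
            (fun p : Fin (m*l) × Fin (m*l) => S k p.1 p.2 = 1 ∧ S k' p.1 p.2 = 1)).card : ℕ) : ℤ) := by
      rw [Finset.card_filter]; push_cast; rfl
    rw [h2, h]
    push_cast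
    ring
  -- swap helper
  have hswap : ∀ (f : Fin t → Fin (m*l) → Fin (m*l) → ℤ),
      (∑ i, ∑ j, ∑ k, f k i j) = ∑ k, ∑ i, ∑ j, f k i j := by
    intro f
    calc (∑ i, ∑ j, ∑ k, f k i j) = ∑ i, ∑ k, ∑ j, f k i j :=
          Finset.sum_congr rfl fun i _ => Finset.sum_comm
      _ = ∑ k, ∑ i, ∑ j, f k i j := Finset.sum_comm
  have hitesum : ∀ (k : Fin t) (A B : ℤ),
      (∑ k' : Fin t, if k = k' then A else B) = t*B + (A - B) := by
    intro k A B
    have h : ∀ k' : Fin t, (if k = k' then A else B) = B + (if k = k' then A - B else 0) := by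
      intro k'; split_ifs <;> ring
    simp only [h, Finset.sum_add_distrib, Finset.sum_const, Finset.card_univ, Fintype.card_fin,
      Finset.sum_ite_eq, Finset.mem_univ, if_true, nsmul_eq_mul]
  have hNsq : (∑ i, ∑ j, (N i j)^2)
      = (t:ℤ) * ((t:ℤ)*((l:ℤ)*l) + (((m:ℤ)*l)*l - (l:ℤ)*l)) := by
    have step1 : ∀ i j, (N i j)^2 = ∑ k, (if S k i j = 1 then (1:ℤ) else 0) * N i j := by
      intro i j
      rw [sq]
      nth_rewrite 1 [hNdef]
      rw [Finset.sum_mul]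
    have step2 : ∀ (k : Fin t) (i j : Fin (m*l)),
        (if S k i j = 1 then (1:ℤ) else 0) * N i j
          = ∑ k', (if S k i j = 1 then (1:ℤ) else 0) * (if S k' i j = 1 then (1:ℤ) else 0) := by
      intro k i j
      rw [hNdef, Finset.mul_sum]
    calc (∑ i, ∑ j, (N i j)^2)
        = ∑ i, ∑ j, ∑ k, (if S k i j = 1 then (1:ℤ) else 0) * N i j := by simp only [step1]
      _ = ∑ k, ∑ i, ∑ j, (if S k i j = 1 then (1:ℤ) else 0) * N i j := hswap _
      _ = ∑ k, ∑ k', ∑ i, ∑ j,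
            (if S k i j = 1 then (1:ℤ) else 0) * (if S k' i j = 1 then (1:ℤ) else 0) := by
          refine Finset.sum_congr rfl fun k _ => ?_
          calc (∑ i, ∑ j, (if S k i j = 1 then (1:ℤ) else 0) * N i j)
              = ∑ i, ∑ j, ∑ k', (if S k i j = 1 then (1:ℤ) else 0) *
                  (if S k' i j = 1 then (1:ℤ) else 0) := by simp only [step2]
            _ = _ := hswap _
      _ = ∑ k : Fin t, ∑ k' : Fin t, (if k = k' then ((m:ℤ)*l)*l else (l:ℤ)*l) := by
          refine Finset.sum_congr rfl fun k _ => Finset.sum_congr rfl fun k' _ => ?_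
          by_cases hkk : k = k'
          · subst hkk; rw [if_pos rfl]; exact hpairEq k
          · rw [if_neg hkk]; exact hpairNe k k' hkk
      _ = ∑ _k : Fin t, ((t:ℤ)*((l:ℤ)*l) + (((m:ℤ)*l)*l - (l:ℤ)*l)) :=
          Finset.sum_congr rfl fun k _ => hitesum k _ _
      _ = (t:ℤ) * ((t:ℤ)*((l:ℤ)*l) + (((m:ℤ)*l)*l - (l:ℤ)*l)) := by
          rw [Finset.sum_const, Finset.card_univ, Fintype.card_fin, nsmul_eq_mul]
  -- the vector g
  set g : Fin (m*l) → ℤ := fun i => 1 - ((m:ℤ)*l) * δ i with hgdef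
  have hgsum : (∑ i, g i) = 0 := by
    simp only [hgdef]
    rw [Finset.sum_sub_distrib, ← Finset.mul_sum, hdsum]
    simp only [Finset.sum_const, Finset.card_univ, Fintype.card_fin, smul_eq_mul, nsmul_eq_mul]
    push_cast <;> ring
  have hgsq : (∑ i, (g i)^2) = ((m:ℤ)*l)*((m:ℤ)*l) - ((m:ℤ)*l) := by
    have h : ∀ i, (g i)^2 = 1 - (2*((m:ℤ)*l)) * δ i + (((m:ℤ)*l)*((m:ℤ)*l)) * δ i := by
      intro i
      simp only [hgdef, hddef]
      split_ifs <;> ring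
    simp only [h]
    rw [Finset.sum_add_distrib, Finset.sum_sub_distrib, ← Finset.mul_sum, ← Finset.mul_sum, hdsum]
    simp only [Finset.sum_const, Finset.card_univ, Fintype.card_fin, smul_eq_mul, nsmul_eq_mul]
    push_cast <;> ring
  have hgz : g z = 1 - (m:ℤ)*l := by simp [hgdef, hddef]
  -- weighted sums
  have hinnerj : ∀ i, (∑ j, g j * N i j) = (t:ℤ)*l - ((m:ℤ)*l) * N i z := by
    intro i
    have h : ∀ j, g j * N i j = N i j - ((m:ℤ)*l) * (δ j * N i j) := by
      intro j; simp only [hgdef]; ring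
    simp only [h]
    rw [Finset.sum_sub_distrib, ← Finset.mul_sum, hdel (fun j => N i j), hNrow]
  have hggN : (∑ i, ∑ j, g i * g j * N i j)
      = ((m:ℤ)*l)*((m:ℤ)*l)*t - ((m:ℤ)*l)*((t:ℤ)*l) := by
    have h1 : ∀ i, (∑ j, g i * g j * N i j) = g i * ((t:ℤ)*l - ((m:ℤ)*l) * N i z) := by
      intro i
      simp only [mul_assoc]
      rw [← Finset.mul_sum]
      rw [show (∑ j, g j * N i j) = (t:ℤ)*l - ((m:ℤ)*l) * N i z from hinnerj i]
      ring
    have h3 : (∑ i, g i * N i z) = (t:ℤ)*l - ((m:ℤ)*l)*t := by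
      have h : ∀ i, g i * N i z = N i z - ((m:ℤ)*l) * (δ i * N i z) := by
        intro i; simp only [hgdef]; ring
      simp only [h]
      rw [Finset.sum_sub_distrib, ← Finset.mul_sum, hdel (fun i => N i z), hN00, hNcol z]
    have h4 : ∀ i, g i * ((t:ℤ)*l - ((m:ℤ)*l) * N i z)
        = ((t:ℤ)*(l:ℤ)) * g i - ((m:ℤ)*l) * (g i * N i z) := by
      intro i; ring
    simp only [h1, h4]
    rw [Finset.sum_sub_distrib, ← Finset.mul_sum, ← Finset.mul_sum, hgsum, h3]
    ring
  have hgg : (∑ i, ∑ j, g i * g j) = 0 := by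
    have h : ∀ i, (∑ j, g i * g j) = g i * 0 := by
      intro i; rw [← Finset.mul_sum, hgsum]
    simp only [h, mul_zero, Finset.sum_const_zero]
  have hggsq : (∑ i, ∑ j, (g i)^2 * (g j)^2)
      = (((m:ℤ)*l)*((m:ℤ)*l) - ((m:ℤ)*l)) * (((m:ℤ)*l)*((m:ℤ)*l) - ((m:ℤ)*l)) := by
    have h : ∀ i, (∑ j, (g i)^2 * (g j)^2)
        = (g i)^2 * (((m:ℤ)*l)*((m:ℤ)*l) - ((m:ℤ)*l)) := by
      intro i; rw [← Finset.mul_sum, hgsq]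
    simp only [h]
    rw [← Finset.sum_mul, hgsq]
  have pull : ∀ (c : ℤ) (X : Fin (m*l) → Fin (m*l) → ℤ),
      (∑ i, ∑ j, c * X i j) = c * ∑ i, ∑ j, X i j := by
    intro c X
    simp only [← Finset.mul_sum]
  have htZ : (t:ℤ) * ((m:ℤ) - 1) = ((m:ℤ)*(l:ℤ) - 1)^2 := by
    have h1 : (1:ℕ) ≤ m := by omega
    zify [h1, hq1] at ht
    push_cast at ht ⊢
    linarith [ht]
  -- the key sum-of-squares identity
  have key : (∑ i, ∑ j, ((t:ℤ) + g i * g j - m * N i j)^2) = 0 := by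
    have expand : ∀ i j, ((t:ℤ) + g i * g j - m * N i j)^2
        = (t:ℤ)^2 + (g i)^2*(g j)^2 + (m:ℤ)^2*((N i j)^2) + (2*(t:ℤ))*(g i * g j)
            - (2*(t:ℤ)*m)*(N i j) - (2*(m:ℤ))*(g i * g j * N i j) := by
      intro i j; ring
    simp only [expand, Finset.sum_add_distrib, Finset.sum_sub_distrib]
    rw [pull, pull, pull, pull, hggsq, hgg, hNsq, hNsum, hggN]
    simp [Finset.sum_const, Finset.card_univ]
    push_cast
    linear_combination (-(((m:ℤ)*l)^2)) * htZ
  have hF0 : ∀ i j, (t:ℤ) + g i * g j - m * N i j = 0 := by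
    intro i j
    have h1 : ∀ x ∈ (univ : Finset (Fin (m*l))),
        (0:ℤ) ≤ ∑ j, ((t:ℤ) + g x * g j - m * N x j)^2 :=
      fun x _ => Finset.sum_nonneg fun j _ => sq_nonneg _
    have h2 := (Finset.sum_eq_zero_iff_of_nonneg h1).mp key i (Finset.mem_univ i)
    have h3 := (Finset.sum_eq_zero_iff_of_nonneg
      (fun y _ => sq_nonneg ((t:ℤ) + g i * g y - m * N i y))).mp h2 j (Finset.mem_univ j)
    exact (pow_eq_zero_iff (by norm_num : (2:ℕ) ≠ 0)).mp h3
  -- relate the goal sums to N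
  have hTcast : ∀ i j, ((∑ k, ∑ a ∈ Finset.Icc 2 m, ind m l (S k) a i j : ℕ) : ℤ)
      = (t:ℤ) - N i j := by
    intro i j
    simp only [hind]
    push_cast
    have h : ∀ k : Fin t, (if S k i j = 1 then (0:ℤ) else 1)
        = 1 - (if S k i j = 1 then (1:ℤ) else 0) := by
      intro k; split_ifs <;> ring
    simp only [h]
    rw [Finset.sum_sub_distrib]
    simp [hNdef, Finset.sum_const, Finset.card_univ]
  have hmne : (m:ℤ) ≠ 0 := Nat.cast_ne_zero.mpr (by omega)
  refine ⟨?_, ?_, ?_⟩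
  · simp only [hind, h11, if_pos]
    simp
  · intro i hi
    have hgi : g i = 1 := by simp [hgdef, hddef, hi]
    have hc1 : ((l * (m*l - 1) : ℕ) : ℤ) = (l:ℤ) * ((m:ℤ)*l - 1) := by
      rw [Nat.cast_mul, Nat.cast_sub hq1]
      push_cast
      ring
    constructor
    · have h := hF0 i z
      rw [hgi, hgz] at h
      have hmn : (m:ℤ) * N i z = (t:ℤ) + 1 - (m:ℤ)*l := by linarith
      have hfin : ((∑ k, ∑ a ∈ Finset.Icc 2 m, ind m l (S k) a i z : ℕ) : ℤ)
          = ((l * (m*l - 1) : ℕ) : ℤ) := by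
        rw [hTcast, hc1]
        apply mul_left_cancel₀ hmne
        linear_combination htZ - hmn
      exact_mod_cast hfin
    · have h := hF0 z i
      rw [hgi, hgz] at h
      have hmn : (m:ℤ) * N z i = (t:ℤ) + 1 - (m:ℤ)*l := by linarith
      have hfin : ((∑ k, ∑ a ∈ Finset.Icc 2 m, ind m l (S k) a z i : ℕ) : ℤ)
          = ((l * (m*l - 1) : ℕ) : ℤ) := by
        rw [hTcast, hc1]
        apply mul_left_cancel₀ hmne
        linear_combination htZ - hmn
      exact_mod_cast hfin
  · intro i j hi hj
    have hgi : g i = 1 := by simp [hgdef, hddef, hi]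
    have hgj : g j = 1 := by simp [hgdef, hddef, hj]
    have hc2 : ((l * (m*l - 2) : ℕ) : ℤ) = (l:ℤ) * ((m:ℤ)*l - 2) := by
      rw [Nat.cast_mul, Nat.cast_sub hq2]
      push_cast
      ring
    have h := hF0 i j
    rw [hgi, hgj] at h
    have hmn : (m:ℤ) * N i j = (t:ℤ) + 1 := by linarith
    have hfin : ((∑ k, ∑ a ∈ Finset.Icc 2 m, ind m l (S k) a i j : ℕ) : ℤ)
        = ((l * (m*l - 2) : ℕ) : ℤ) := by
      rw [hTcast, hc2]
      apply mul_left_cancel₀ hmne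
      linear_combination htZ - hmn
    exact_mod_cast hfin
end

section
/- Suppose S_1,...,S_t are frequency squares of type F(mλ;λ) satisfying a non-constant full relation with respect to x and y. Then x ≡ y ≡ tλ (mod 2) and mλ ≡ 0 (mod 2). -/
open Finset

lemma cnt (n y : ℕ) (hy : y ≤ n) :
    (∑ j : Fin n, if (j:ℕ) < y then (1:ℕ) else 0) = y := by
  rw [Fin.sum_univ_eq_sum_range (fun j => if j < y then (1:ℕ) else 0) n,
    ← Finset.card_filter]
  have : (Finset.range n).filter (fun j => j < y) = Finset.range y := by
    ext j; simp; omega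
  rw [this, Finset.card_range]

lemma cnt' (n y : ℕ) (hy : y ≤ n) :
    (∑ j : Fin n, if (j:ℕ) < y then (0:ℕ) else 1) = n - y := by
  have h1 := cnt n y hy
  have h2 : (∑ j : Fin n, ((if (j:ℕ) < y then (0:ℕ) else 1) +
      (if (j:ℕ) < y then (1:ℕ) else 0))) = n := by
    have : ∀ j : Fin n, ((if (j:ℕ) < y then (0:ℕ) else 1) +
        (if (j:ℕ) < y then (1:ℕ) else 0)) = 1 := by
      intro j; split <;> rfl
    simp [this]
  rw [Finset.sum_add_distrib, h1] at h2
  omega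

theorem stmt9 (m l t x y : ℕ) (hm : 0 < m) (hl : 0 < l)
    (S : Fin t → Matrix (Fin (m*l)) (Fin (m*l)) ℕ)
    (hS : ∀ k, IsFS m l (S k))
    (hrel : NCFR m l t S x y) :
    x % 2 = (t * l) % 2 ∧ y % 2 = (t * l) % 2 ∧ (m * l) % 2 = 0 := by
  obtain ⟨hx, hy, hne, σ, τ, hrel⟩ := hrel
  have hn0 : 0 < m * l := Nat.mul_pos hm hl
  have h1m : (1:ℕ) ∈ Finset.Icc 1 m := Finset.mem_Icc.mpr ⟨le_refl 1, hm⟩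
  have rowA : ∀ i : Fin (m*l),
      (∑ j, ∑ k, ind m l (S k) 1 (σ i) (τ j)) = t * l := by
    intro i
    rw [Finset.sum_comm]
    have h : ∀ k : Fin t, (∑ j, ind m l (S k) 1 (σ i) (τ j)) = l := by
      intro k
      have e1 : (∑ j, ind m l (S k) 1 (σ i) (τ j)) = ∑ j, ind m l (S k) 1 (σ i) j :=
        Equiv.sum_comp τ _
      have e2 : (∑ j, ind m l (S k) 1 (σ i) j) =
          (Finset.univ.filter (fun j => S k (σ i) j = 1)).card := by
        rw [Finset.card_filter]; rfl
      rw [e1, e2]; exact (hS k).2.1 (σ i) 1 h1m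
    simp [h, Finset.sum_const, mul_comm]
  have colA : ∀ j : Fin (m*l),
      (∑ i, ∑ k, ind m l (S k) 1 (σ i) (τ j)) = t * l := by
    intro j
    rw [Finset.sum_comm]
    have h : ∀ k : Fin t, (∑ i, ind m l (S k) 1 (σ i) (τ j)) = l := by
      intro k
      have e1 : (∑ i, ind m l (S k) 1 (σ i) (τ j)) = ∑ i, ind m l (S k) 1 i (τ j) :=
        Equiv.sum_comp σ (fun i => ind m l (S k) 1 i (τ j))
      have e2 : (∑ i, ind m l (S k) 1 i (τ j)) =
          (Finset.univ.filter (fun i => S k i (τ j) = 1)).card := by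
        rw [Finset.card_filter]; rfl
      rw [e1, e2]; exact (hS k).2.2 (τ j) 1 h1m
    simp [h, Finset.sum_const, mul_comm]
  have key_row : ∀ i : Fin (m*l),
      (t * l) % 2 = (if (i:ℕ) < x then m*l - y else y) % 2 := by
    intro i
    rw [← rowA i, Finset.sum_nat_mod]
    congr 1
    rw [Finset.sum_congr rfl (fun j _ => hrel i j)]
    by_cases hi : (i:ℕ) < x
    · simp only [hi, true_iff, if_true]
      exact cnt' (m*l) y hy
    · simp only [hi, false_iff, ite_not, if_false]
      exact cnt (m*l) y hy
  have key_col : ∀ j : Fin (m*l),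
      (t * l) % 2 = (if (j:ℕ) < y then m*l - x else x) % 2 := by
    intro j
    rw [← colA j, Finset.sum_nat_mod]
    congr 1
    rw [Finset.sum_congr rfl (fun i _ => hrel i j)]
    by_cases hj : (j:ℕ) < y
    · simp only [hj, iff_true, if_true]
      exact cnt' (m*l) x hx
    · simp only [hj, iff_false, ite_not, if_false]
      exact cnt (m*l) x hx
  have hrow0 : 0 < x → (t*l) % 2 = (m*l - y) % 2 := fun h => by
    have := key_row ⟨0, hn0⟩; simpa [h] using this
  have hrow1 : x < m*l → (t*l) % 2 = y % 2 := fun h => by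
    have := key_row ⟨x, h⟩; simpa using this
  have hcol0 : 0 < y → (t*l) % 2 = (m*l - x) % 2 := fun h => by
    have := key_col ⟨0, hn0⟩; simpa [h] using this
  have hcol1 : y < m*l → (t*l) % 2 = x % 2 := fun h => by
    have := key_col ⟨y, h⟩; simpa using this
  omega
end

section
/- Let λ be odd and suppose S_1,...,S_t are pairwise orthogonal frequency squares of type F(mλ;λ) satisfying a non-constant full relation. Then t is odd. -/
open Finset

/- ### Auxiliary lemmas -/

lemma sum_ite_lt_nat (L y : ℕ) (h : y ≤ L) :
    ∑ j : Fin L, (if (j:ℕ) < y then (1:ℕ) else 0) = y := by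
  rw [Fin.sum_univ_eq_sum_range (fun j => if j < y then (1:ℕ) else 0) L]
  rw [← Finset.sum_filter]
  have hf : (Finset.range L).filter (fun j => j < y) = Finset.range y := by
    ext j; simp only [Finset.mem_filter, Finset.mem_range]; omega
  rw [hf]; simp

lemma sum_ite_lt_zmod (L y : ℕ) (h : y ≤ L) :
    ∑ j : Fin L, (if (j:ℕ) < y then (1:ZMod 2) else 0) = (y : ZMod 2) := by
  have h1 : ∑ j : Fin L, (if (j:ℕ) < y then (1:ZMod 2) else 0)
      = ((∑ j : Fin L, (if (j:ℕ) < y then (1:ℕ) else 0) : ℕ) : ZMod 2) := by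
    rw [Nat.cast_sum]
    exact Finset.sum_congr rfl (fun j _ => by split_ifs <;> simp)
  rw [h1, sum_ite_lt_nat L y h]

lemma sum_ite_not_lt_zmod (L y : ℕ) (h : y ≤ L) :
    ∑ j : Fin L, (if (j:ℕ) < y then (0:ZMod 2) else 1)
      = (L : ZMod 2) - (y : ZMod 2) := by
  have h1 : ∀ j : Fin L, (if (j:ℕ) < y then (0:ZMod 2) else 1)
      = 1 - (if (j:ℕ) < y then (1:ZMod 2) else 0) := by
    intro j; split_ifs <;> ring
  simp_rw [h1]
  rw [Finset.sum_sub_distrib, sum_ite_lt_zmod L y h, Finset.sum_const,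
    Finset.card_univ, Fintype.card_fin, nsmul_eq_mul, mul_one]

theorem stmt10 (m l t : ℕ) (hm : 0 < m) (hl : Odd l)
    (S : Fin t → Matrix (Fin (m*l)) (Fin (m*l)) ℕ)
    (hS : ∀ k, IsFS m l (S k))
    (horth : ∀ k k', k ≠ k' → Orth m l (S k) (S k'))
    (hrel : ∃ x y, NCFR m l t S x y) :
    Odd t := by
  obtain ⟨x, y, hxL, hyL, hnc, σ, τ, hP⟩ := hrel
  by_contra hodd
  rw [Nat.not_odd_iff_even] at hodd
  have ht2 : t % 2 = 0 := Nat.even_iff.mp hodd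
  have hlpos : 0 < l := hl.pos
  have hL : 0 < m * l := Nat.mul_pos hm hlpos
  have hl2 : l % 2 = 1 := Nat.odd_iff.mp hl
  rcases Nat.eq_zero_or_pos t with ht0 | htpos
  · -- t = 0 : the pattern is constant zero, contradicting non-constancy
    subst ht0
    have hpat : ∀ i j : Fin (m*l), ((i:ℕ) < x ↔ (j:ℕ) < y) := by
      intro i j
      have h := hP i j
      simp only [Finset.univ_eq_empty, Finset.sum_empty, Nat.zero_mod] at h
      by_contra hc
      rw [if_neg hc] at h
      exact absurd h (by norm_num)
    have i0 : Fin (m*l) := ⟨0, hL⟩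
    by_cases h0y : 0 < y
    · have hxall : ∀ i : Fin (m*l), (i:ℕ) < x := by
        intro i
        exact (hpat i ⟨0, hL⟩).mpr h0y
      have hx' : x = m*l := by
        have := hxall ⟨m*l - 1, by omega⟩
        simp only at this
        omega
      have hyall : ∀ j : Fin (m*l), (j:ℕ) < y := by
        intro j
        exact (hpat ⟨0, hL⟩ j).mp (by simp only; omega)
      have hy' : y = m*l := by
        have := hyall ⟨m*l - 1, by omega⟩
        simp only at this
        omega
      exact hnc ⟨Or.inr hx', Or.inr hy'⟩
    · have hy0 : y = 0 := by omega
      have hx0 : x = 0 := by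
        by_contra hc
        have : (0:ℕ) < y := (hpat ⟨0, hL⟩ ⟨0, hL⟩).mp (by simp only; omega)
        omega
      exact hnc ⟨Or.inl hx0, Or.inl hy0⟩
  · -- main case : t ≥ 1
    set k0 : Fin t := ⟨0, htpos⟩ with hk0
    have h1m : (1:ℕ) ∈ Finset.Icc 1 m := Finset.mem_Icc.mpr ⟨le_refl 1, hm⟩
    -- row sums of each indicator square
    have rowsum : ∀ (k : Fin t) (i : Fin (m*l)),
        ∑ j, ind m l (S k) 1 (σ i) (τ j) = l := by
      intro k i
      have h1 : ∑ j : Fin (m*l), ind m l (S k) 1 (σ i) (τ j)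
          = ∑ j, ind m l (S k) 1 (σ i) j :=
        Equiv.sum_comp τ (fun j => ind m l (S k) 1 (σ i) j)
      rw [h1]
      have h2 := (hS k).2.1 (σ i) 1 h1m
      rw [Finset.card_filter] at h2
      simpa [ind] using h2
    -- column sums of each indicator square
    have colsum : ∀ (k : Fin t) (j : Fin (m*l)),
        ∑ i, ind m l (S k) 1 (σ i) (τ j) = l := by
      intro k j
      have h1 : ∑ i : Fin (m*l), ind m l (S k) 1 (σ i) (τ j)
          = ∑ i, ind m l (S k) 1 i (τ j) :=
        Equiv.sum_comp σ (fun i => ind m l (S k) 1 i (τ j))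
      rw [h1]
      have h2 := (hS k).2.2 (τ j) 1 h1m
      rw [Finset.card_filter] at h2
      simpa [ind] using h2
    -- orthogonality sums
    have orthsum : ∀ k k' : Fin t, k ≠ k' →
        ∑ i, ∑ j, ind m l (S k) 1 (σ i) (τ j) * ind m l (S k') 1 (σ i) (τ j) = l * l := by
      intro k k' hkk'
      have horth' := horth k k' hkk' 1 1 h1m h1m
      rw [Finset.card_filter, Fintype.sum_prod_type] at horth'
      have h1 : ∀ i : Fin (m*l),
          ∑ j, ind m l (S k) 1 (σ i) (τ j) * ind m l (S k') 1 (σ i) (τ j)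
          = ∑ j, ind m l (S k) 1 (σ i) j * ind m l (S k') 1 (σ i) j := fun i =>
        Equiv.sum_comp τ (fun j => ind m l (S k) 1 (σ i) j * ind m l (S k') 1 (σ i) j)
      have h2 : ∑ i : Fin (m*l), ∑ j, ind m l (S k) 1 (σ i) j * ind m l (S k') 1 (σ i) j
          = ∑ i, ∑ j, ind m l (S k) 1 i j * ind m l (S k') 1 i j :=
        Equiv.sum_comp σ (fun i => ∑ j, ind m l (S k) 1 i j * ind m l (S k') 1 i j)
      calc ∑ i, ∑ j, ind m l (S k) 1 (σ i) (τ j) * ind m l (S k') 1 (σ i) (τ j)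
          = ∑ i : Fin (m*l), ∑ j, ind m l (S k) 1 (σ i) j * ind m l (S k') 1 (σ i) j :=
            Finset.sum_congr rfl (fun i _ => h1 i)
        _ = ∑ i, ∑ j, ind m l (S k) 1 i j * ind m l (S k') 1 i j := h2
        _ = ∑ i : Fin (m*l), ∑ j : Fin (m*l),
              (if S k i j = 1 ∧ S k' i j = 1 then 1 else 0) := by
            apply Finset.sum_congr rfl; intro i _
            apply Finset.sum_congr rfl; intro j _
            simp only [ind]
            split_ifs with h1' h2' h3' <;> simp_all
        _ = l * l := horth'
    -- casts
    have hcastl : ((l:ℕ) : ZMod 2) = 1 := by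
      rw [← ZMod.natCast_mod l 2, hl2, Nat.cast_one]
    have hcastt : ((t:ℕ) : ZMod 2) = 0 := by
      rw [← ZMod.natCast_mod t 2, ht2, Nat.cast_zero]
    have hLM : ((m*l : ℕ) : ZMod 2) = (m : ZMod 2) := by
      push_cast; rw [hcastl, mul_one]
    -- the pattern in ZMod 2
    have hcastA : ∀ i j : Fin (m*l),
        ((∑ k, ind m l (S k) 1 (σ i) (τ j) : ℕ) : ZMod 2)
          = (if ((i:ℕ) < x ↔ (j:ℕ) < y) then (0:ZMod 2) else 1) := by
      intro i j
      rw [← ZMod.natCast_mod _ 2, hP i j]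
      split_ifs <;> simp
    -- row parity equations
    have hrowZ : ∀ i : Fin (m*l),
        ∑ j : Fin (m*l), (if ((i:ℕ) < x ↔ (j:ℕ) < y) then (0:ZMod 2) else 1) = 0 := by
      intro i
      have h1 : ∑ j, ((∑ k, ind m l (S k) 1 (σ i) (τ j) : ℕ) : ZMod 2)
          = ((t * l : ℕ) : ZMod 2) := by
        rw [← Nat.cast_sum]
        congr 1
        rw [Finset.sum_comm]
        simp_rw [rowsum]
        rw [Finset.sum_const, Finset.card_univ, Fintype.card_fin, smul_eq_mul]
      have h2 : ∑ j : Fin (m*l), (if ((i:ℕ) < x ↔ (j:ℕ) < y) then (0:ZMod 2) else 1)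
          = ((t * l : ℕ) : ZMod 2) := by
        rw [← h1]
        exact Finset.sum_congr rfl (fun j _ => (hcastA i j).symm)
      rw [h2]; push_cast; rw [hcastt, zero_mul]
    -- column parity equations
    have hcolZ : ∀ j : Fin (m*l),
        ∑ i : Fin (m*l), (if ((i:ℕ) < x ↔ (j:ℕ) < y) then (0:ZMod 2) else 1) = 0 := by
      intro j
      have h1 : ∑ i, ((∑ k, ind m l (S k) 1 (σ i) (τ j) : ℕ) : ZMod 2)
          = ((t * l : ℕ) : ZMod 2) := by
        rw [← Nat.cast_sum]
        congr 1
        rw [Finset.sum_comm]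
        simp_rw [colsum]
        rw [Finset.sum_const, Finset.card_univ, Fintype.card_fin, smul_eq_mul]
      have h2 : ∑ i : Fin (m*l), (if ((i:ℕ) < x ↔ (j:ℕ) < y) then (0:ZMod 2) else 1)
          = ((t * l : ℕ) : ZMod 2) := by
        rw [← h1]
        exact Finset.sum_congr rfl (fun i _ => (hcastA i j).symm)
      rw [h2]; push_cast; rw [hcastt, zero_mul]
    -- specialized row equations
    have hrow_lt : 0 < x → (m : ZMod 2) - (y : ZMod 2) = 0 := by
      intro hx0
      have h := hrowZ ⟨0, hL⟩
      have hrw : ∀ j : Fin (m*l),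
          (if (((⟨0,hL⟩ : Fin (m*l)):ℕ) < x ↔ (j:ℕ) < y) then (0:ZMod 2) else 1)
            = (if (j:ℕ) < y then (0:ZMod 2) else 1) := by
        intro j
        have h0x : ((⟨0,hL⟩ : Fin (m*l)):ℕ) < x := hx0
        by_cases hj : (j:ℕ) < y <;> simp [h0x, hj]
      rw [Finset.sum_congr rfl (fun j _ => hrw j), sum_ite_not_lt_zmod _ y hyL, hLM] at h
      exact h
    have hrow_ge : x < m*l → (y : ZMod 2) = 0 := by
      intro hxlt
      have h := hrowZ ⟨x, hxlt⟩
      have hrw : ∀ j : Fin (m*l),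
          (if (((⟨x,hxlt⟩ : Fin (m*l)):ℕ) < x ↔ (j:ℕ) < y) then (0:ZMod 2) else 1)
            = (if (j:ℕ) < y then (1:ZMod 2) else 0) := by
        intro j
        have h0x : ¬ (((⟨x,hxlt⟩ : Fin (m*l)):ℕ) < x) := by simp
        by_cases hj : (j:ℕ) < y <;> simp [h0x, hj]
      rw [Finset.sum_congr rfl (fun j _ => hrw j), sum_ite_lt_zmod _ y hyL] at h
      exact h
    -- specialized column equations
    have hcol_lt : 0 < y → (m : ZMod 2) - (x : ZMod 2) = 0 := by
      intro hy0
      have h := hcolZ ⟨0, hL⟩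
      have hrw : ∀ i : Fin (m*l),
          (if ((i:ℕ) < x ↔ (((⟨0,hL⟩ : Fin (m*l)):ℕ) < y)) then (0:ZMod 2) else 1)
            = (if (i:ℕ) < x then (0:ZMod 2) else 1) := by
        intro i
        have h0y : ((⟨0,hL⟩ : Fin (m*l)):ℕ) < y := hy0
        by_cases hi : (i:ℕ) < x <;> simp [h0y, hi]
      rw [Finset.sum_congr rfl (fun i _ => hrw i), sum_ite_not_lt_zmod _ x hxL, hLM] at h
      exact h
    have hcol_ge : y < m*l → (x : ZMod 2) = 0 := by
      intro hylt
      have h := hcolZ ⟨y, hylt⟩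
      have hrw : ∀ i : Fin (m*l),
          (if ((i:ℕ) < x ↔ (((⟨y,hylt⟩ : Fin (m*l)):ℕ) < y)) then (0:ZMod 2) else 1)
            = (if (i:ℕ) < x then (1:ZMod 2) else 0) := by
        intro i
        have h0y : ¬ (((⟨y,hylt⟩ : Fin (m*l)):ℕ) < y) := by simp
        by_cases hi : (i:ℕ) < x <;> simp [h0y, hi]
      rw [Finset.sum_congr rfl (fun i _ => hrw i), sum_ite_lt_zmod _ x hxL] at h
      exact h
    -- the diamond equation  x + y = m + 1  (mod 2), via orthogonality
    have hdiam : (x : ZMod 2) + (y : ZMod 2) = (m : ZMod 2) + 1 := by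
      -- Q := ∑ i ∑ j  d_{k0}(i,j) * pattern(i,j)  in ZMod 2
      have hef : ∀ i j : Fin (m*l),
          (if ((i:ℕ) < x ↔ (j:ℕ) < y) then (0:ZMod 2) else 1)
            = (if (i:ℕ) < x then (1:ZMod 2) else 0)
              + (if (j:ℕ) < y then (1:ZMod 2) else 0) := by
        intro i j
        by_cases hi : (i:ℕ) < x <;> by_cases hj : (j:ℕ) < y <;> simp [hi, hj] <;> decide
      -- evaluation 1
      have heval1 :
          ∑ i, ∑ j, ((ind m l (S k0) 1 (σ i) (τ j) : ℕ) : ZMod 2)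
              * (if ((i:ℕ) < x ↔ (j:ℕ) < y) then (0:ZMod 2) else 1)
            = (x : ZMod 2) + (y : ZMod 2) := by
        simp_rw [hef, mul_add, Finset.sum_add_distrib]
        have hA : ∑ i, ∑ j, ((ind m l (S k0) 1 (σ i) (τ j) : ℕ) : ZMod 2)
            * (if (i:ℕ) < x then (1:ZMod 2) else 0) = (x : ZMod 2) := by
          have : ∀ i : Fin (m*l), ∑ j, ((ind m l (S k0) 1 (σ i) (τ j) : ℕ) : ZMod 2)
              * (if (i:ℕ) < x then (1:ZMod 2) else 0)
              = (if (i:ℕ) < x then (1:ZMod 2) else 0) := by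
            intro i
            rw [← Finset.sum_mul, ← Nat.cast_sum, rowsum k0 i, hcastl, one_mul]
          simp_rw [this]
          exact sum_ite_lt_zmod _ x hxL
        have hB : ∑ i, ∑ j, ((ind m l (S k0) 1 (σ i) (τ j) : ℕ) : ZMod 2)
            * (if (j:ℕ) < y then (1:ZMod 2) else 0) = (y : ZMod 2) := by
          rw [Finset.sum_comm]
          have : ∀ j : Fin (m*l), ∑ i, ((ind m l (S k0) 1 (σ i) (τ j) : ℕ) : ZMod 2)
              * (if (j:ℕ) < y then (1:ZMod 2) else 0)
              = (if (j:ℕ) < y then (1:ZMod 2) else 0) := by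
            intro j
            rw [← Finset.sum_mul, ← Nat.cast_sum, colsum k0 j, hcastl, one_mul]
          simp_rw [this]
          exact sum_ite_lt_zmod _ y hyL
        rw [hA, hB]
      -- evaluation 2
      have heval2 :
          ∑ i, ∑ j, ((ind m l (S k0) 1 (σ i) (τ j) : ℕ) : ZMod 2)
              * (if ((i:ℕ) < x ↔ (j:ℕ) < y) then (0:ZMod 2) else 1)
            = (m : ZMod 2) + 1 := by
        have hsubst : ∀ i j : Fin (m*l),
            ((ind m l (S k0) 1 (σ i) (τ j) : ℕ) : ZMod 2)
              * (if ((i:ℕ) < x ↔ (j:ℕ) < y) then (0:ZMod 2) else 1)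
            = ∑ k, ((ind m l (S k0) 1 (σ i) (τ j) : ℕ) : ZMod 2)
              * ((ind m l (S k) 1 (σ i) (τ j) : ℕ) : ZMod 2) := by
          intro i j
          rw [← hcastA i j, Nat.cast_sum, Finset.mul_sum]
        simp_rw [hsubst]
        have hGcast : ∀ k : Fin t,
            ∑ i : Fin (m*l), ∑ j : Fin (m*l),
              ((ind m l (S k0) 1 (σ i) (τ j) : ℕ) : ZMod 2)
                * ((ind m l (S k) 1 (σ i) (τ j) : ℕ) : ZMod 2)
            = ((∑ i : Fin (m*l), ∑ j : Fin (m*l),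
                ind m l (S k0) 1 (σ i) (τ j) * ind m l (S k) 1 (σ i) (τ j) : ℕ) : ZMod 2) := by
          intro k; push_cast; rfl
        have hGk0 : ∑ i : Fin (m*l), ∑ j : Fin (m*l),
            ind m l (S k0) 1 (σ i) (τ j) * ind m l (S k0) 1 (σ i) (τ j) = (m*l) * l := by
          have hsq : ∀ i j : Fin (m*l),
              ind m l (S k0) 1 (σ i) (τ j) * ind m l (S k0) 1 (σ i) (τ j)
                = ind m l (S k0) 1 (σ i) (τ j) := by
            intro i j; simp only [ind]; split_ifs <;> rfl
          simp_rw [hsq, rowsum k0]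
          rw [Finset.sum_const, Finset.card_univ, Fintype.card_fin, smul_eq_mul]
        calc ∑ i : Fin (m*l), ∑ j : Fin (m*l), ∑ k : Fin t,
              ((ind m l (S k0) 1 (σ i) (τ j) : ℕ) : ZMod 2)
                * ((ind m l (S k) 1 (σ i) (τ j) : ℕ) : ZMod 2)
            = ∑ i : Fin (m*l), ∑ k : Fin t, ∑ j : Fin (m*l),
              ((ind m l (S k0) 1 (σ i) (τ j) : ℕ) : ZMod 2)
                * ((ind m l (S k) 1 (σ i) (τ j) : ℕ) : ZMod 2) :=
              Finset.sum_congr rfl (fun i _ => Finset.sum_comm)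
          _ = ∑ k : Fin t, ∑ i : Fin (m*l), ∑ j : Fin (m*l),
              ((ind m l (S k0) 1 (σ i) (τ j) : ℕ) : ZMod 2)
                * ((ind m l (S k) 1 (σ i) (τ j) : ℕ) : ZMod 2) := Finset.sum_comm
          _ = (m : ZMod 2) + 1 := by
              rw [← Finset.add_sum_erase _ _ (Finset.mem_univ k0)]
              have h1 : ∑ i : Fin (m*l), ∑ j : Fin (m*l),
                  ((ind m l (S k0) 1 (σ i) (τ j) : ℕ) : ZMod 2)
                    * ((ind m l (S k0) 1 (σ i) (τ j) : ℕ) : ZMod 2) = (m : ZMod 2) := by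
                rw [hGcast k0, hGk0]; push_cast; rw [hcastl, mul_one, mul_one]
              have h2 : ∀ k ∈ Finset.univ.erase k0,
                  ∑ i : Fin (m*l), ∑ j : Fin (m*l),
                    ((ind m l (S k0) 1 (σ i) (τ j) : ℕ) : ZMod 2)
                      * ((ind m l (S k) 1 (σ i) (τ j) : ℕ) : ZMod 2) = 1 := by
                intro k hk
                have hkne : k0 ≠ k := (Finset.ne_of_mem_erase hk).symm
                rw [hGcast k, orthsum k0 k hkne]
                push_cast; rw [hcastl, mul_one]
              rw [h1, Finset.sum_congr rfl h2, Finset.sum_const,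
                Finset.card_erase_of_mem (Finset.mem_univ k0), Finset.card_univ,
                Fintype.card_fin, nsmul_eq_mul, mul_one]
              congr 1
              rw [← Nat.cast_one (R := ZMod 2), ← ZMod.natCast_mod (t-1) 2]
              congr 1
              omega
      rw [← heval1, heval2]
    -- endgame : case analysis
    have hfinal : False := by
      rcases (by omega : x = 0 ∨ x = m*l ∨ (0 < x ∧ x < m*l)) with hx0 | hxl | ⟨hx1, hx2⟩
      · have hy' : ¬(y = 0 ∨ y = m*l) := fun h => hnc ⟨Or.inl hx0, h⟩
        have hy1 : 0 < y := by omega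
        have hy2 : y < m*l := by omega
        have hX : (x : ZMod 2) = 0 := hcol_ge hy2
        have hM : (m : ZMod 2) = 0 := by
          have := hcol_lt hy1; rw [hX, sub_zero] at this; exact this
        have hY : (y : ZMod 2) = 0 := hrow_ge (by omega)
        rw [hX, hY, hM, zero_add, zero_add] at hdiam
        exact zero_ne_one hdiam
      · have hy' : ¬(y = 0 ∨ y = m*l) := fun h => hnc ⟨Or.inr hxl, h⟩
        have hy1 : 0 < y := by omega
        have hy2 : y < m*l := by omega
        have hX : (x : ZMod 2) = 0 := hcol_ge hy2
        have hM : (m : ZMod 2) = 0 := by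
          have := hcol_lt hy1; rw [hX, sub_zero] at this; exact this
        have hY : (y : ZMod 2) = 0 := by
          have := hrow_lt (by omega); rw [hM, zero_sub, neg_eq_zero] at this; exact this
        rw [hX, hY, hM, zero_add, zero_add] at hdiam
        exact zero_ne_one hdiam
      · have hY : (y : ZMod 2) = 0 := hrow_ge hx2
        have hM : (m : ZMod 2) = 0 := by
          have := hrow_lt hx1; rw [hY, sub_zero] at this; exact this
        have hX : (x : ZMod 2) = 0 := by
          rcases (by omega : y < m*l ∨ y = m*l) with hy2 | hy2
          · exact hcol_ge hy2
          · have := hcol_lt (by omega); rw [hM, zero_sub, neg_eq_zero] at this; exact this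
        rw [hX, hY, hM, zero_add, zero_add] at hdiam
        exact zero_ne_one hdiam
    exact hfinal
end

section
/- Let λ be odd, and suppose {S_1,...,S_t} is a set of pairwise orthogonal frequency squares of type F(mλ;λ) satisfying a non-constant full relation. Then the set is maximal: there is no frequency square S of type F(mλ;λ) that is orthogonal to every S_k. -/
open Finset

/-- Counting sum over an initial segment of `Fin n`. -/
lemma aux_count_lt (n x c : ℕ) (hx : x ≤ n) :
    ∑ i : Fin n, (if (i : ℕ) < x then c else 0) = x * c := by
  rw [Fin.sum_univ_eq_sum_range (fun i => if i < x then c else 0) n]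
  rw [← Finset.sum_filter]
  have : (Finset.range n).filter (· < x) = Finset.range x := by
    ext i; simp only [Finset.mem_filter, Finset.mem_range]; omega
  rw [this, Finset.sum_const, Finset.card_range, smul_eq_mul]

/-- Row count of a frequency square after permuting columns. -/
lemma aux_row (m l : ℕ) (T : Matrix (Fin (m*l)) (Fin (m*l)) ℕ) (hT : IsFS m l T)
    (a : ℕ) (ha : a ∈ Finset.Icc 1 m) (τ : Equiv.Perm (Fin (m*l))) (i : Fin (m*l)) :
    ∑ j, (if T i (τ j) = a then 1 else 0) = l := by
  rw [Equiv.sum_comp τ (fun j => if T i j = a then 1 else 0)]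
  rw [← Finset.card_filter]
  exact hT.2.1 i a ha

/-- Column count of a frequency square after permuting rows. -/
lemma aux_col (m l : ℕ) (T : Matrix (Fin (m*l)) (Fin (m*l)) ℕ) (hT : IsFS m l T)
    (a : ℕ) (ha : a ∈ Finset.Icc 1 m) (σ : Equiv.Perm (Fin (m*l))) (j : Fin (m*l)) :
    ∑ i, (if T (σ i) j = a then 1 else 0) = l := by
  rw [Equiv.sum_comp σ (fun i => if T i j = a then 1 else 0)]
  rw [← Finset.card_filter]
  exact hT.2.2 j a ha

/-- The key parity lemma: for any frequency square `T` and symbol `a`, the total number of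
incidences between cells of `T` carrying symbol `a` and cells of the `S k` carrying symbol `1`
is congruent to `xλ + yλ` modulo 2. -/
lemma aux_key (m l t x y : ℕ) (S : Fin t → Matrix (Fin (m*l)) (Fin (m*l)) ℕ)
    (σ τ : Equiv.Perm (Fin (m*l))) (hx : x ≤ m*l) (hy : y ≤ m*l)
    (hrel : ∀ i j : Fin (m*l), (∑ k, ind m l (S k) 1 (σ i) (τ j)) % 2 =
      (if ((i : ℕ) < x ↔ (j : ℕ) < y) then 0 else 1))
    (T : Matrix (Fin (m*l)) (Fin (m*l)) ℕ) (hT : IsFS m l T)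
    (a : ℕ) (ha : a ∈ Finset.Icc 1 m) :
    ((∑ k, (Finset.univ.filter
        (fun q : Fin (m*l) × Fin (m*l) => T q.1 q.2 = a ∧ S k q.1 q.2 = 1)).card : ℕ) : ZMod 2)
      = ((x * l + y * l : ℕ) : ZMod 2) := by
  have hL : ∑ k, (Finset.univ.filter
        (fun q : Fin (m*l) × Fin (m*l) => T q.1 q.2 = a ∧ S k q.1 q.2 = 1)).card
      = ∑ i, ∑ j, (if T (σ i) (τ j) = a then (∑ k, ind m l (S k) 1 (σ i) (τ j)) else 0) := by
    have h1 : ∀ k : Fin t, (Finset.univ.filter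
        (fun q : Fin (m*l) × Fin (m*l) => T q.1 q.2 = a ∧ S k q.1 q.2 = 1)).card
        = ∑ i, ∑ j, (if T (σ i) (τ j) = a ∧ S k (σ i) (τ j) = 1 then 1 else 0) := by
      intro k
      calc (Finset.univ.filter
          (fun q : Fin (m*l) × Fin (m*l) => T q.1 q.2 = a ∧ S k q.1 q.2 = 1)).card
          = ∑ i, ∑ j, (if T i j = a ∧ S k i j = 1 then 1 else 0) := by
            rw [Finset.card_filter]
            exact Fintype.sum_prod_type _
        _ = ∑ i, ∑ j, (if T i (τ j) = a ∧ S k i (τ j) = 1 then 1 else 0) :=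
            (Finset.sum_congr rfl fun i _ =>
              (Equiv.sum_comp τ (fun j => if T i j = a ∧ S k i j = 1 then 1 else 0)).symm)
        _ = ∑ i, ∑ j, (if T (σ i) (τ j) = a ∧ S k (σ i) (τ j) = 1 then 1 else 0) :=
            (Equiv.sum_comp σ (fun i => ∑ j,
              if T i (τ j) = a ∧ S k i (τ j) = 1 then 1 else 0)).symm
    rw [Finset.sum_congr rfl fun k _ => h1 k]
    rw [Finset.sum_comm]
    refine Finset.sum_congr rfl fun i _ => ?_
    rw [Finset.sum_comm]
    refine Finset.sum_congr rfl fun j _ => ?_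
    by_cases hTa : T (σ i) (τ j) = a
    · simp only [hTa, if_true, true_and]
      refine Finset.sum_congr rfl fun k _ => ?_
      unfold ind
      by_cases h2 : S k (σ i) (τ j) = 1 <;> simp [h2]
    · simp [hTa]
  have hA : ∑ i, ∑ j, (if T (σ i) (τ j) = a ∧ (i : ℕ) < x then 1 else 0 : ℕ) = x * l := by
    have h : ∀ i : Fin (m*l), ∑ j, (if T (σ i) (τ j) = a ∧ (i : ℕ) < x then 1 else 0 : ℕ)
        = if (i : ℕ) < x then l else 0 := by
      intro i
      by_cases hix : (i : ℕ) < x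
      · simp only [hix, and_true, if_true]
        exact aux_row m l T hT a ha τ (σ i)
      · simp [hix]
    rw [Finset.sum_congr rfl fun i _ => h i]
    exact aux_count_lt (m*l) x l hx
  have hB : ∑ i, ∑ j, (if T (σ i) (τ j) = a ∧ (j : ℕ) < y then 1 else 0 : ℕ) = y * l := by
    rw [Finset.sum_comm]
    have h : ∀ j : Fin (m*l), ∑ i, (if T (σ i) (τ j) = a ∧ (j : ℕ) < y then 1 else 0 : ℕ)
        = if (j : ℕ) < y then l else 0 := by
      intro j
      by_cases hjy : (j : ℕ) < y
      · simp only [hjy, and_true, if_true]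
        exact aux_col m l T hT a ha σ (τ j)
      · simp [hjy]
    rw [Finset.sum_congr rfl fun j _ => h j]
    exact aux_count_lt (m*l) y l hy
  have step : ∀ i j : Fin (m*l),
      ((if T (σ i) (τ j) = a then (∑ k, ind m l (S k) 1 (σ i) (τ j)) else 0 : ℕ) : ZMod 2)
      = ((if T (σ i) (τ j) = a ∧ (i : ℕ) < x then 1 else 0 : ℕ) : ZMod 2)
        + ((if T (σ i) (τ j) = a ∧ (j : ℕ) < y then 1 else 0 : ℕ) : ZMod 2) := by
    intro i j
    by_cases hTa : T (σ i) (τ j) = a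
    · simp only [hTa, if_true, true_and]
      have hcast : ((∑ k, ind m l (S k) 1 (σ i) (τ j) : ℕ) : ZMod 2)
          = (((∑ k, ind m l (S k) 1 (σ i) (τ j)) % 2 : ℕ) : ZMod 2) :=
        (ZMod.natCast_mod _ 2).symm
      rw [hcast, hrel i j]
      by_cases hix : (i : ℕ) < x <;> by_cases hjy : (j : ℕ) < y <;>
        simp [hix, hjy] <;> decide
    · simp [hTa]
  have hA' : ∑ i, ∑ j, ((if T (σ i) (τ j) = a ∧ (i : ℕ) < x then 1 else 0 : ℕ) : ZMod 2)
      = ((x * l : ℕ) : ZMod 2) := by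
    rw [← hA, Nat.cast_sum]
    exact Finset.sum_congr rfl fun i _ => (Nat.cast_sum _ _).symm
  have hB' : ∑ i, ∑ j, ((if T (σ i) (τ j) = a ∧ (j : ℕ) < y then 1 else 0 : ℕ) : ZMod 2)
      = ((y * l : ℕ) : ZMod 2) := by
    rw [← hB, Nat.cast_sum]
    exact Finset.sum_congr rfl fun i _ => (Nat.cast_sum _ _).symm
  rw [hL, Nat.cast_sum]
  rw [Finset.sum_congr rfl fun i (_ : i ∈ Finset.univ) => Nat.cast_sum Finset.univ _]
  rw [Finset.sum_congr rfl fun i (_ : i ∈ Finset.univ) =>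
    Finset.sum_congr rfl fun j (_ : j ∈ Finset.univ) => step i j]
  simp only [Finset.sum_add_distrib]
  rw [hA', hB']
  push_cast
  ring

theorem stmt12 (m l t : ℕ) (hm : 0 < m) (hl : Odd l)
    (S : Fin t → Matrix (Fin (m*l)) (Fin (m*l)) ℕ)
    (hS : ∀ k, IsFS m l (S k))
    (horth : ∀ k k', k ≠ k' → Orth m l (S k) (S k'))
    (hrel : ∃ x y, NCFR m l t S x y) :
    ¬ ∃ S' : Matrix (Fin (m*l)) (Fin (m*l)) ℕ,
        IsFS m l S' ∧ ∀ k, Orth m l S' (S k) := by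
  rintro ⟨S', hS'fs, hS'o⟩
  obtain ⟨x, y, hx, hy, hnc, σ, τ, hrel⟩ := hrel
  by_cases hdeg : m = 1 ∨ t = 0
  · -- degenerate case: the relation sum is constant, contradicting non-constancy
    have hconst : ∃ c, ∀ i j : Fin (m*l), (∑ k, ind m l (S k) 1 (σ i) (τ j)) = c := by
      rcases hdeg with h1 | h0
      · refine ⟨t, fun i j => ?_⟩
        have : ∀ k : Fin t, ind m l (S k) 1 (σ i) (τ j) = 1 := by
          intro k
          have hmem := Finset.mem_Icc.mp ((hS k).1 (σ i) (τ j))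
          have h11 : S k (σ i) (τ j) = 1 := by omega
          show (if S k (σ i) (τ j) = 1 then 1 else 0) = 1
          rw [if_pos h11]
        rw [Finset.sum_congr rfl fun k _ => this k]
        simp
      · subst h0
        exact ⟨0, fun i j => by simp⟩
    obtain ⟨c, hc⟩ := hconst
    rcases not_and_or.mp hnc with h | h
    · push_neg at h
      obtain ⟨hx0, hxn⟩ := h
      have hx1 : 0 < x := Nat.pos_of_ne_zero hx0
      have hx2 : x < m*l := lt_of_le_of_ne hx hxn
      have e0 := hrel ⟨0, by omega⟩ ⟨0, by omega⟩
      have e1 := hrel ⟨x, by omega⟩ ⟨0, by omega⟩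
      rw [hc] at e0 e1
      simp only [Fin.val_mk] at e0 e1
      by_cases hy0 : (0:ℕ) < y <;> simp [hx1, hy0, lt_irrefl] at e0 e1 <;> omega
    · push_neg at h
      obtain ⟨hy0, hyn⟩ := h
      have hy1 : 0 < y := Nat.pos_of_ne_zero hy0
      have hy2 : y < m*l := lt_of_le_of_ne hy hyn
      have e0 := hrel ⟨0, by omega⟩ ⟨0, by omega⟩
      have e1 := hrel ⟨0, by omega⟩ ⟨y, by omega⟩
      rw [hc] at e0 e1
      simp only [Fin.val_mk] at e0 e1
      by_cases hx0 : (0:ℕ) < x <;> simp [hy1, hx0, lt_irrefl] at e0 e1 <;> omega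
  · push_neg at hdeg
    obtain ⟨hm1, ht0⟩ := hdeg
    have hm2 : 2 ≤ m := by omega
    have ht1 : 0 < t := Nat.pos_of_ne_zero ht0
    have h1m : (1:ℕ) ∈ Finset.Icc 1 m := by rw [Finset.mem_Icc]; omega
    have h2m : (2:ℕ) ∈ Finset.Icc 1 m := by rw [Finset.mem_Icc]; omega
    set k₀ : Fin t := ⟨0, ht1⟩
    have key1 := aux_key m l t x y S σ τ hx hy hrel S' hS'fs 1 h1m
    have key2 := aux_key m l t x y S σ τ hx hy hrel (S k₀) (hS k₀) 2 h2m
    -- compute the two totals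
    have hC1 : ∑ k, (Finset.univ.filter
        (fun q : Fin (m*l) × Fin (m*l) => S' q.1 q.2 = 1 ∧ S k q.1 q.2 = 1)).card
        = t * (l * l) := by
      rw [Finset.sum_congr rfl fun k _ => hS'o k 1 1 h1m h1m]
      simp [Finset.sum_const, mul_comm]
    have hC2 : ∑ k, (Finset.univ.filter
        (fun q : Fin (m*l) × Fin (m*l) => S k₀ q.1 q.2 = 2 ∧ S k q.1 q.2 = 1)).card
        + l * l = t * (l * l) := by
      have hpt : ∀ k : Fin t, (Finset.univ.filter
          (fun q : Fin (m*l) × Fin (m*l) => S k₀ q.1 q.2 = 2 ∧ S k q.1 q.2 = 1)).card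
          + (if k = k₀ then l * l else 0) = l * l := by
        intro k
        by_cases hk : k = k₀
        · have hzero : (Finset.univ.filter
              (fun q : Fin (m*l) × Fin (m*l) => S k₀ q.1 q.2 = 2 ∧ S k₀ q.1 q.2 = 1)).card = 0 := by
            rw [Finset.card_eq_zero, Finset.filter_eq_empty_iff]
            intro q _
            simp only [not_and]
            intro h2 h1
            omega
          rw [hk, hzero, if_pos rfl]
          omega
        · rw [horth k₀ k (fun h => hk h.symm) 2 1 h2m h1m, if_neg hk]
          omega
      have := Finset.sum_congr rfl fun k (_ : k ∈ Finset.univ) => hpt k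
      rw [Finset.sum_add_distrib] at this
      rw [Finset.sum_ite_eq' Finset.univ k₀ (fun _ => l * l)] at this
      simp only [Finset.mem_univ, if_true] at this
      rw [this, Finset.sum_const, Finset.card_univ, Fintype.card_fin, smul_eq_mul]
    rw [hC1] at key1
    have key2' : ((∑ k, (Finset.univ.filter
        (fun q : Fin (m*l) × Fin (m*l) => S k₀ q.1 q.2 = 2 ∧ S k q.1 q.2 = 1)).card : ℕ) : ZMod 2)
        = ((t * (l * l) : ℕ) : ZMod 2) := key2.trans key1.symm
    have hll : ((l * l : ℕ) : ZMod 2) = 0 := by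
      have hcast : (((∑ k, (Finset.univ.filter
          (fun q : Fin (m*l) × Fin (m*l) => S k₀ q.1 q.2 = 2 ∧ S k q.1 q.2 = 1)).card)
          + l * l : ℕ) : ZMod 2) = ((t * (l * l) : ℕ) : ZMod 2) := by rw [hC2]
      rw [Nat.cast_add, key2'] at hcast
      exact add_left_cancel (hcast.trans (add_zero _).symm)
    rw [ZMod.natCast_eq_zero_iff] at hll
    have : 2 ∣ l := (Nat.Prime.dvd_mul Nat.prime_two).mp hll |>.elim id id
    rw [Nat.odd_iff] at hl
    omega
end

section
/- Let λ be odd and suppose {S_1,...,S_t} is a set of pairwise orthogonal frequency squares of type F(mλ;λ) satisfying a non-constant full relation with respect to x and y. Then t ≡ m(x+y) − (m+1) (mod 8). -/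
open Finset

set_option maxRecDepth 10000 in
private lemma key8 (T M L X Y : ZMod 8)
    (h1 : 4*L = 4) (h2 : 4*M = 0)
    (h3 : 4*(T*L - Y) = 0) (h4 : 4*(T*L - X) = 0)
    (h5 : 4*((M*L)*L + (T-1)*(L*L) - (X*L + Y*L)) = 0)
    (h6 : (T*(M*L)*L + T*(T-1)*(L*L)) - ((M*L)*X + (M*L)*Y - 2*(X*Y))
          - 2*(T*(M*L)*L) + 2*(X*(T*L)) + 2*(Y*(T*L)) = 0) :
    T = M*(X+Y) - (M+1) := by
  revert h1 h2 h3 h4 h5 h6; revert T M L X Y; decide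

private lemma dvd2_zmod (z : ℤ) (h : 2 ∣ z) : (4 : ZMod 8) * (z : ZMod 8) = 0 := by
  obtain ⟨c, rfl⟩ := h
  push_cast
  have h8 : (8 : ZMod 8) = 0 := by decide
  calc (4 : ZMod 8) * (2 * c) = 8 * c := by ring
  _ = 0 := by rw [h8]; ring

private lemma dvd8_zmod (z : ℤ) (h : (8:ℤ) ∣ z) : ((z : ZMod 8)) = 0 :=
  (ZMod.intCast_zmod_eq_zero_iff_dvd z 8).mpr (by exact_mod_cast h)

private lemma sum_ite_fin (t : ℕ) (k : Fin t) (a b : ℤ) :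
    (∑ k' : Fin t, (if k = k' then a else b)) = a + ((t:ℤ) - 1)*b := by
  have e : ∀ k' : Fin t, (if k = k' then a else b) = b + (if k = k' then a - b else 0) := by
    intro k'; split_ifs <;> ring
  simp_rw [e]
  rw [Finset.sum_add_distrib, Finset.sum_const, Finset.sum_ite_eq]
  simp [Finset.card_univ]
  ring

private lemma aux_sum_lt (n x : ℕ) (hx : x ≤ n) :
    (∑ i : Fin n, if (i:ℕ) < x then (1:ℤ) else 0) = x := by
  rw [Fin.sum_univ_eq_sum_range (fun v => if v < x then (1:ℤ) else 0)]
  rw [Finset.sum_boole]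
  congr 1
  have : (Finset.range n).filter (fun v => v < x) = Finset.range x := by
    ext v; simp [Finset.mem_range, Finset.mem_filter]; omega
  rw [this, Finset.card_range]

private lemma main_abstract (m l t x y : ℕ) (hm : 0 < m) (hl : Odd l)
    (hx : x ≤ m*l) (hy : y ≤ m*l)
    (hnc : ¬((x = 0 ∨ x = m*l) ∧ (y = 0 ∨ y = m*l)))
    (A : Fin t → Fin (m*l) × Fin (m*l) → ℤ)
    (hArow : ∀ (k : Fin t) (i : Fin (m*l)), (∑ j, A k (i, j)) = (l:ℤ))
    (hAcol : ∀ (k : Fin t) (j : Fin (m*l)), (∑ i, A k (i, j)) = (l:ℤ))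
    (hAA : ∀ k k' : Fin t, k ≠ k' → (∑ c, A k c * A k' c) = (l:ℤ)*(l:ℤ))
    (hAsq : ∀ k, (∑ c, A k c * A k c) = ((m:ℤ)*(l:ℤ))*(l:ℤ))
    (hTP' : ∀ c : Fin (m*l) × Fin (m*l),
      (2:ℤ) ∣ (∑ k, A k c) - (if ((c.1:ℕ) < x ↔ (c.2:ℕ) < y) then 0 else 1)) :
    (t : ℤ) ≡ (m : ℤ) * ((x : ℤ) + y) - ((m : ℤ) + 1) [ZMOD 8] := by
  obtain ⟨T, hTdef⟩ : ∃ T : Fin (m*l) × Fin (m*l) → ℤ, ∀ c, T c = ∑ k, A k c :=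
    ⟨_, fun c => rfl⟩
  obtain ⟨p, hpdef⟩ : ∃ p : Fin (m*l) → ℤ, ∀ i, p i = if (i:ℕ) < x then 1 else 0 :=
    ⟨_, fun i => rfl⟩
  obtain ⟨q, hqdef⟩ : ∃ q : Fin (m*l) → ℤ, ∀ j, q j = if (j:ℕ) < y then 1 else 0 :=
    ⟨_, fun j => rfl⟩
  obtain ⟨P, hPdef⟩ : ∃ P : Fin (m*l) × Fin (m*l) → ℤ,
      ∀ c, P c = if ((c.1:ℕ) < x ↔ (c.2:ℕ) < y) then (0:ℤ) else 1 :=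
    ⟨_, fun c => rfl⟩
  have hTP : ∀ c, (2:ℤ) ∣ T c - P c := by
    intro c; rw [hTdef, hPdef]; exact hTP' c
  have hl0 : 0 < l := by rcases hl with ⟨c, rfl⟩; omega
  have hn0 : 0 < m*l := Nat.mul_pos hm hl0
  have hcase : (0 < x ∧ x < m*l) ∨ (0 < y ∧ y < m*l) := by
    by_cases h1 : x = 0 ∨ x = m*l
    · right
      have h2 : ¬(y = 0 ∨ y = m*l) := fun h => hnc ⟨h1, h⟩
      omega
    · left; omega
  -- basic sums
  have hTrow : ∀ i, (∑ j, T (i, j)) = (t:ℤ) * l := by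
    intro i
    simp_rw [hTdef]
    rw [Finset.sum_comm]
    simp_rw [hArow]
    simp [Finset.card_univ, mul_comm]
  have hTcol : ∀ j, (∑ i, T (i, j)) = (t:ℤ) * l := by
    intro j
    simp_rw [hTdef]
    rw [Finset.sum_comm]
    simp_rw [hAcol]
    simp [Finset.card_univ, mul_comm]
  have hST : (∑ c, T c) = (t:ℤ)*((m:ℤ)*l*l) := by
    rw [Fintype.sum_prod_type]
    simp_rw [hTrow]
    simp [Finset.card_univ]
    ring
  have hsp : (∑ i, p i) = (x:ℤ) := by simp_rw [hpdef]; exact aux_sum_lt _ _ hx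
  have hsq : (∑ j, q j) = (y:ℤ) := by simp_rw [hqdef]; exact aux_sum_lt _ _ hy
  have hSp : (∑ c, T c * p c.1) = (x:ℤ)*((t:ℤ)*l) := by
    rw [Fintype.sum_prod_type]
    simp_rw [← Finset.sum_mul, hTrow, ← Finset.mul_sum, hsp]
    ring
  have hSq : (∑ c, T c * q c.2) = (y:ℤ)*((t:ℤ)*l) := by
    rw [Fintype.sum_prod_type_right]
    simp_rw [← Finset.sum_mul, hTcol, ← Finset.mul_sum, hsq]
    ring
  have inner : ∀ k k' : Fin t, (∑ c, A k c * A k' c)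
      = if k = k' then (m:ℤ)*l*l else (l:ℤ)*l := by
    intro k k'
    by_cases h : k = k'
    · subst h; simp [hAsq k]
    · simp [h, hAA k k' h]
  have hTsq : (∑ c, T c * T c)
      = (t:ℤ)*((m:ℤ)*l*l) + (t:ℤ)*((t:ℤ)-1)*((l:ℤ)*l) := by
    have e : ∀ c, T c * T c = ∑ k, ∑ k', A k c * A k' c := by
      intro c; rw [hTdef, Finset.sum_mul_sum]
    simp_rw [e]
    rw [Finset.sum_comm]
    have e2 : ∀ k : Fin t, (∑ c, ∑ k', A k c * A k' c)
        = (m:ℤ)*l*l + ((t:ℤ)-1)*((l:ℤ)*l) := by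
      intro k
      rw [Finset.sum_comm]
      simp_rw [inner k]
      exact sum_ite_fin t k _ _
    simp_rw [e2]
    simp [Finset.card_univ]
    ring
  -- P identities
  have hPid : ∀ c : Fin (m*l) × Fin (m*l),
      P c = p c.1 + q c.2 - 2*(p c.1 * q c.2) := by
    intro c
    by_cases hi : (c.1:ℕ) < x <;> by_cases hj : (c.2:ℕ) < y <;>
      simp [hPdef, hpdef, hqdef, hi, hj]
  have hSP : (∑ c, P c) = (m:ℤ)*l*x + (m:ℤ)*l*y - 2*((x:ℤ)*y) := by
    simp_rw [hPid]
    rw [Finset.sum_sub_distrib, Finset.sum_add_distrib]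
    have e1 : (∑ c : Fin (m*l) × Fin (m*l), p c.1) = ((m:ℤ)*l) * x := by
      rw [Fintype.sum_prod_type]
      simp_rw [Finset.sum_const, Finset.card_univ, Fintype.card_fin, nsmul_eq_mul]
      rw [← Finset.mul_sum, hsp]
      push_cast; ring
    have e2 : (∑ c : Fin (m*l) × Fin (m*l), q c.2) = ((m:ℤ)*l) * y := by
      rw [Fintype.sum_prod_type]
      simp_rw [hsq]
      simp [Finset.card_univ]
    have e3 : (∑ c : Fin (m*l) × Fin (m*l), p c.1 * q c.2) = (x:ℤ) * y := by
      rw [Fintype.sum_prod_type]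
      simp_rw [← Finset.mul_sum, hsq]
      rw [← Finset.sum_mul, hsp]
    have e4 : (∑ c : Fin (m * l) × Fin (m * l), 2 * (p c.1 * q c.2)) = 2 * ((x:ℤ) * y) := by
      rw [← Finset.mul_sum, e3]
    rw [e1, e2, e4]
  have hProw : ∀ i : Fin (m*l), (∑ j, P (i, j))
      = ((m:ℤ)*l) * p i + (y:ℤ) - 2*(p i * (y:ℤ)) := by
    intro i
    simp_rw [hPid]
    rw [Finset.sum_sub_distrib, Finset.sum_add_distrib]
    rw [Finset.sum_const, Finset.card_univ, Fintype.card_fin, nsmul_eq_mul]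
    rw [hsq]
    have e5 : (∑ j : Fin (m*l), 2 * (p i * q j)) = (2 * p i) * (y:ℤ) := by
      have e : ∀ j : Fin (m*l), 2 * (p i * q j) = (2 * p i) * q j := by intro j; ring
      simp_rw [e]
      rw [← Finset.mul_sum, hsq]
    rw [e5]
    push_cast; ring
  have hPcol : ∀ j : Fin (m*l), (∑ i, P (i, j))
      = ((m:ℤ)*l) * q j + (x:ℤ) - 2*(q j * (x:ℤ)) := by
    intro j
    simp_rw [hPid]
    rw [Finset.sum_sub_distrib, Finset.sum_add_distrib]
    rw [Finset.sum_const, Finset.card_univ, Fintype.card_fin, nsmul_eq_mul]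
    rw [hsp]
    have e5 : (∑ i : Fin (m*l), 2 * (p i * q j)) = (2 * q j) * (x:ℤ) := by
      have e : ∀ i : Fin (m*l), 2 * (p i * q j) = (2 * q j) * p i := by intro i; ring
      simp_rw [e]
      rw [← Finset.mul_sum, hsp]
    rw [e5]
    push_cast; ring
  have hrowpar : ∀ i : Fin (m*l),
      (2:ℤ) ∣ (t:ℤ)*l - (((m:ℤ)*l) * p i + (y:ℤ) - 2*(p i * (y:ℤ))) := by
    intro i
    have h := Finset.dvd_sum (fun j (_ : j ∈ univ) => hTP (i, j))
    rw [Finset.sum_sub_distrib, hTrow i, hProw i] at h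
    exact h
  have hcolpar : ∀ j : Fin (m*l),
      (2:ℤ) ∣ (t:ℤ)*l - (((m:ℤ)*l) * q j + (x:ℤ) - 2*(q j * (x:ℤ))) := by
    intro j
    have h := Finset.dvd_sum (fun i (_ : i ∈ univ) => hTP (i, j))
    rw [Finset.sum_sub_distrib, hTcol j, hPcol j] at h
    exact h
  set i0 : Fin (m*l) := ⟨0, hn0⟩ with hi0
  set iN : Fin (m*l) := ⟨m*l - 1, by omega⟩ with hiN
  -- t ≥ 1
  have ht1 : 0 < t := by
    by_contra h
    have ht0 : t = 0 := by omega
    subst ht0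
    have hT0 : ∀ c, T c = 0 := by intro c; rw [hTdef]; simp
    have hall : ∀ c : Fin (m*l) × Fin (m*l), ((c.1:ℕ) < x ↔ (c.2:ℕ) < y) := by
      intro c
      by_cases hc : ((c.1:ℕ) < x ↔ (c.2:ℕ) < y)
      · exact hc
      · exfalso
        have h2 := hTP c
        rw [hT0 c, hPdef c, if_neg hc] at h2
        norm_num at h2
    rcases hcase with ⟨hx0, hxn⟩ | ⟨hy0, hyn⟩
    · have h1 := (hall (i0, iN)).mp (by simpa [hi0] using hx0)
      have h2 : ¬((i0:ℕ) < y) := fun hh =>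
        (by simp [hiN]; omega : ¬((iN:ℕ) < x)) ((hall (iN, i0)).mpr hh)
      simp [hiN, hi0] at h1 h2
      omega
    · have h1 := (hall (iN, i0)).mpr (by simpa [hi0] using hy0)
      have h2 : ¬((i0:ℕ) < x) := fun hh =>
        (by simp [hiN]; omega : ¬((iN:ℕ) < y)) ((hall (i0, iN)).mp hh)
      simp [hiN, hi0] at h1 h2
      omega
  set k0 : Fin t := ⟨0, ht1⟩ with hk0
  -- the per-square congruence
  have hA0T : (∑ c, A k0 c * T c) = (m:ℤ)*l*l + ((t:ℤ)-1)*((l:ℤ)*l) := by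
    have e : ∀ c, A k0 c * T c = ∑ k, A k0 c * A k c := by
      intro c; rw [hTdef, Finset.mul_sum]
    simp_rw [e]
    rw [Finset.sum_comm]
    simp_rw [inner k0]
    exact sum_ite_fin t k0 _ _
  have hA0p : (∑ c, A k0 c * p c.1) = (l:ℤ) * x := by
    rw [Fintype.sum_prod_type]
    simp_rw [← Finset.sum_mul, hArow, ← Finset.mul_sum, hsp]
  have hA0q : (∑ c, A k0 c * q c.2) = (l:ℤ) * y := by
    rw [Fintype.sum_prod_type_right]
    simp_rw [← Finset.sum_mul, hAcol, ← Finset.mul_sum, hsq]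
  have hA0P : (∑ c, A k0 c * P c)
      = (l:ℤ)*x + (l:ℤ)*y - 2*(∑ c, A k0 c * (p c.1 * q c.2)) := by
    have e : ∀ c : Fin (m*l) × Fin (m*l), A k0 c * P c
        = A k0 c * p c.1 + A k0 c * q c.2 - 2*(A k0 c * (p c.1 * q c.2)) := by
      intro c; rw [hPid c]; ring
    simp_rw [e]
    rw [Finset.sum_sub_distrib, Finset.sum_add_distrib, hA0p, hA0q, ← Finset.mul_sum]
  have hC : (2:ℤ) ∣ (m:ℤ)*l*l + ((t:ℤ)-1)*((l:ℤ)*l) - ((x:ℤ)*l + (y:ℤ)*l) := by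
    have hC2 : (2:ℤ) ∣ ∑ c, (A k0 c * T c - A k0 c * P c) := by
      apply Finset.dvd_sum
      intro c _
      have h2 := (hTP c).mul_left (A k0 c)
      rwa [mul_sub] at h2
    rw [Finset.sum_sub_distrib, hA0T, hA0P] at hC2
    have h5 := dvd_sub hC2 (dvd_mul_right (2:ℤ) (∑ c, A k0 c * (p c.1 * q c.2)))
    rwa [show ((m:ℤ)*l*l + ((t:ℤ)-1)*((l:ℤ)*l)
        - ((l:ℤ)*x + (l:ℤ)*y - 2*(∑ c, A k0 c * (p c.1 * q c.2))))
        - 2*(∑ c, A k0 c * (p c.1 * q c.2))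
        = (m:ℤ)*l*l + ((t:ℤ)-1)*((l:ℤ)*l) - ((x:ℤ)*l + (y:ℤ)*l) from by ring] at h5
  -- main mod 8 congruence
  have hTeven : ∀ c : Fin (m*l) × Fin (m*l),
      ((c.1:ℕ) < x ↔ (c.2:ℕ) < y) → (2:ℤ) ∣ T c := by
    intro c hc
    have h := hTP c
    rw [hPdef c, if_pos hc] at h
    simpa using h
  have hSpq : (2:ℤ) ∣ ∑ c, T c * (p c.1 * q c.2) := by
    apply Finset.dvd_sum
    intro c _
    by_cases hi : (c.1:ℕ) < x
    · by_cases hj : (c.2:ℕ) < y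
      · have h2 : (2:ℤ) ∣ T c := hTeven c (by tauto)
        rw [hpdef, hqdef, if_pos hi, if_pos hj]
        simpa using h2
      · rw [hqdef, if_neg hj]; simp
    · rw [hpdef, if_neg hi]; simp
  have hSTP : (∑ c, T c * P c)
      = (x:ℤ)*((t:ℤ)*l) + (y:ℤ)*((t:ℤ)*l) - 2*(∑ c, T c * (p c.1 * q c.2)) := by
    have e : ∀ c : Fin (m*l) × Fin (m*l), T c * P c
        = T c * p c.1 + T c * q c.2 - 2*(T c * (p c.1 * q c.2)) := by
      intro c; rw [hPid c]; ring
    simp_rw [e]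
    rw [Finset.sum_sub_distrib, Finset.sum_add_distrib, hSp, hSq, ← Finset.mul_sum]
  have hcell8 : ∀ c : Fin (m*l) × Fin (m*l),
      (8:ℤ) ∣ T c * T c - P c - 2 * T c + 2 * (T c * P c) := by
    intro c
    by_cases hc : ((c.1:ℕ) < x ↔ (c.2:ℕ) < y)
    · have hP0 : P c = 0 := by rw [hPdef c, if_pos hc]
      obtain ⟨b, hb⟩ := hTeven c hc
      obtain ⟨u, hu⟩ := Int.even_mul_succ_self (b-1)
      refine ⟨u, ?_⟩
      rw [hP0, hb]
      linear_combination 4*hu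
    · have hP1 : P c = 1 := by rw [hPdef c, if_neg hc]
      have h2 : (2:ℤ) ∣ T c - 1 := by
        have h := hTP c; rwa [hP1] at h
      obtain ⟨b, hb⟩ := h2
      obtain ⟨u, hu⟩ := Int.even_mul_succ_self b
      refine ⟨u, ?_⟩
      have hT : T c = 2*b + 1 := by omega
      rw [hP1, hT]
      linear_combination 4*hu
  have hM : (8:ℤ) ∣ ((t:ℤ)*((m:ℤ)*l*l) + (t:ℤ)*((t:ℤ)-1)*((l:ℤ)*l))
      - ((m:ℤ)*l*x + (m:ℤ)*l*y - 2*((x:ℤ)*y))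
      - 2*((t:ℤ)*((m:ℤ)*l*l))
      + 2*((x:ℤ)*((t:ℤ)*l)) + 2*((y:ℤ)*((t:ℤ)*l)) := by
    have hMain8 : (8:ℤ) ∣ ∑ c, (T c * T c - P c - 2 * T c + 2 * (T c * P c)) :=
      Finset.dvd_sum (fun c _ => hcell8 c)
    have expand : (∑ c, (T c * T c - P c - 2 * T c + 2 * (T c * P c)))
        = (∑ c, T c * T c) - (∑ c, P c) - 2*(∑ c, T c) + 2*(∑ c, T c * P c) := by
      rw [Finset.sum_add_distrib, Finset.sum_sub_distrib, Finset.sum_sub_distrib,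
        ← Finset.mul_sum, ← Finset.mul_sum]
    obtain ⟨a, ha⟩ := hMain8
    obtain ⟨b, hbb⟩ := hSpq
    rw [expand, hTsq, hSP, hST, hSTP] at ha
    refine ⟨a + b, ?_⟩
    linear_combination ha + 4*hbb
  -- evenness of m*l and m
  have hBdvd : (2:ℤ) ∣ (m:ℤ)*l := by
    rcases hcase with ⟨hx0, hxn⟩ | ⟨hy0, hyn⟩
    · have h1 := hrowpar i0
      have h2 := hrowpar iN
      have hp0 : p i0 = 1 := by
        rw [hpdef]; simp only [hi0]; rw [if_pos]; exact hx0
      have hpN : p iN = 0 := by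
        rw [hpdef]; simp only [hiN]; rw [if_neg]; simp; omega
      rw [hp0] at h1; rw [hpN] at h2
      have h3 := dvd_sub h2 h1
      have e : ((t:ℤ)*l - (((m:ℤ)*l)*0 + y - 2*(0*(y:ℤ))))
          - ((t:ℤ)*l - (((m:ℤ)*l)*1 + y - 2*(1*(y:ℤ)))) = (m:ℤ)*l - 2*y := by ring
      rw [e] at h3
      have h5 := dvd_add h3 (dvd_mul_right (2:ℤ) (y:ℤ))
      rwa [show ((m:ℤ)*l - 2*y) + 2*y = (m:ℤ)*l from by ring] at h5
    · have h1 := hcolpar i0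
      have h2 := hcolpar iN
      have hq0 : q i0 = 1 := by
        rw [hqdef]; simp only [hi0]; rw [if_pos]; exact hy0
      have hqN : q iN = 0 := by
        rw [hqdef]; simp only [hiN]; rw [if_neg]; simp; omega
      rw [hq0] at h1; rw [hqN] at h2
      have h3 := dvd_sub h2 h1
      have e : ((t:ℤ)*l - (((m:ℤ)*l)*0 + x - 2*(0*(x:ℤ))))
          - ((t:ℤ)*l - (((m:ℤ)*l)*1 + x - 2*(1*(x:ℤ)))) = (m:ℤ)*l - 2*x := by ring
      rw [e] at h3
      have h5 := dvd_add h3 (dvd_mul_right (2:ℤ) (x:ℤ))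
      rwa [show ((m:ℤ)*l - 2*x) + 2*x = (m:ℤ)*l from by ring] at h5
  have hmeven : Even m := by
    have h1 : (2:ℤ) ∣ ((m*l : ℕ) : ℤ) := by push_cast; exact hBdvd
    have h2 : 2 ∣ m*l := by exact_mod_cast h1
    rcases (Nat.even_mul).mp (even_iff_two_dvd.mpr h2) with h | h
    · exact h
    · exact absurd h (Nat.not_even_iff_odd.mpr hl)
  have hB1 : (2:ℤ) ∣ (t:ℤ)*l - y := by
    have h1 := hrowpar i0
    by_cases h0x : (0:ℕ) < x
    · have hp0 : p i0 = 1 := by rw [hpdef]; simp only [hi0]; rw [if_pos]; exact h0x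
      rw [hp0] at h1
      have h5 := dvd_add h1 (dvd_sub hBdvd (dvd_mul_right (2:ℤ) (y:ℤ)))
      rwa [show ((t:ℤ)*l - (((m:ℤ)*l)*1 + y - 2*(1*(y:ℤ)))) + ((m:ℤ)*l - 2*y)
        = (t:ℤ)*l - y from by ring] at h5
    · have hp0 : p i0 = 0 := by rw [hpdef]; simp only [hi0]; rw [if_neg]; exact h0x
      rw [hp0] at h1
      rwa [show ((t:ℤ)*l - (((m:ℤ)*l)*0 + y - 2*(0*(y:ℤ)))) = (t:ℤ)*l - y from by ring] at h1
  have hB2 : (2:ℤ) ∣ (t:ℤ)*l - x := by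
    have h1 := hcolpar i0
    by_cases h0y : (0:ℕ) < y
    · have hq0 : q i0 = 1 := by rw [hqdef]; simp only [hi0]; rw [if_pos]; exact h0y
      rw [hq0] at h1
      have h5 := dvd_add h1 (dvd_sub hBdvd (dvd_mul_right (2:ℤ) (x:ℤ)))
      rwa [show ((t:ℤ)*l - (((m:ℤ)*l)*1 + x - 2*(1*(x:ℤ)))) + ((m:ℤ)*l - 2*x)
        = (t:ℤ)*l - x from by ring] at h5
    · have hq0 : q i0 = 0 := by rw [hqdef]; simp only [hi0]; rw [if_neg]; exact h0y
      rw [hq0] at h1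
      rwa [show ((t:ℤ)*l - (((m:ℤ)*l)*0 + x - 2*(0*(x:ℤ)))) = (t:ℤ)*l - x from by ring] at h1
  -- final ZMod 8 computation
  have e1 : (4:ZMod 8) * (l : ZMod 8) = 4 := by
    obtain ⟨c, rfl⟩ := hl
    push_cast
    have h8 : (8 : ZMod 8) = 0 := by decide
    calc (4:ZMod 8) * (2*(c:ZMod 8)+1) = 8*c + 4 := by ring
    _ = 4 := by rw [h8]; ring
  have e2 : (4:ZMod 8) * (m : ZMod 8) = 0 := by
    obtain ⟨c, hc⟩ := hmeven
    subst hc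
    push_cast
    have h8 : (8 : ZMod 8) = 0 := by decide
    calc (4:ZMod 8) * ((c:ZMod 8)+c) = 8*c := by ring
    _ = 0 := by rw [h8]; ring
  have e3 : (4:ZMod 8) * ((t:ZMod 8)*(l:ZMod 8) - (y:ZMod 8)) = 0 := by
    have := dvd2_zmod _ hB1
    push_cast at this
    linear_combination this
  have e4 : (4:ZMod 8) * ((t:ZMod 8)*(l:ZMod 8) - (x:ZMod 8)) = 0 := by
    have := dvd2_zmod _ hB2
    push_cast at this
    linear_combination this
  have e5 : (4:ZMod 8) * (((m:ZMod 8)*(l:ZMod 8))*(l:ZMod 8)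
      + ((t:ZMod 8)-1)*((l:ZMod 8)*(l:ZMod 8))
      - ((x:ZMod 8)*(l:ZMod 8) + (y:ZMod 8)*(l:ZMod 8))) = 0 := by
    have := dvd2_zmod _ hC
    push_cast at this
    linear_combination this
  have e6 : ((t:ZMod 8)*((m:ZMod 8)*(l:ZMod 8))*(l:ZMod 8)
      + (t:ZMod 8)*((t:ZMod 8)-1)*((l:ZMod 8)*(l:ZMod 8)))
      - ((m:ZMod 8)*(l:ZMod 8)*(x:ZMod 8) + (m:ZMod 8)*(l:ZMod 8)*(y:ZMod 8)
        - 2*((x:ZMod 8)*(y:ZMod 8)))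
      - 2*((t:ZMod 8)*((m:ZMod 8)*(l:ZMod 8))*(l:ZMod 8))
      + 2*((x:ZMod 8)*((t:ZMod 8)*(l:ZMod 8)))
      + 2*((y:ZMod 8)*((t:ZMod 8)*(l:ZMod 8))) = 0 := by
    have := dvd8_zmod _ hM
    push_cast at this
    linear_combination this
  have hkey := key8 (t:ZMod 8) (m:ZMod 8) (l:ZMod 8) (x:ZMod 8) (y:ZMod 8)
    e1 e2 e3 e4 e5 e6
  have hfin : (((t:ℤ) : ZMod 8)) = (((m:ℤ)*((x:ℤ)+(y:ℤ)) - ((m:ℤ)+1) : ℤ) : ZMod 8) := by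
    push_cast
    linear_combination hkey
  exact_mod_cast (ZMod.intCast_eq_intCast_iff _ _ _).mp hfin

theorem stmt13 (m l t x y : ℕ) (hm : 0 < m) (hl : Odd l)
    (S : Fin t → Matrix (Fin (m*l)) (Fin (m*l)) ℕ)
    (hS : ∀ k, IsFS m l (S k))
    (horth : ∀ k k', k ≠ k' → Orth m l (S k) (S k'))
    (hrel : NCFR m l t S x y) :
    (t : ℤ) ≡ (m : ℤ) * ((x : ℤ) + y) - ((m : ℤ) + 1) [ZMOD 8] := by
  obtain ⟨hx, hy, hnc, σ, τ, hpar⟩ := hrel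
  have h1m : (1:ℕ) ∈ Finset.Icc 1 m := by simp; omega
  have hArow : ∀ (k : Fin t) (i : Fin (m*l)),
      (∑ j, (if S k (σ i) (τ j) = 1 then (1:ℤ) else 0)) = (l:ℤ) := by
    intro k i
    rw [Equiv.sum_comp τ (fun j => if S k (σ i) j = 1 then (1:ℤ) else 0)]
    rw [Finset.sum_boole]
    rw [(hS k).2.1 (σ i) 1 h1m]
  have hAcol : ∀ (k : Fin t) (j : Fin (m*l)),
      (∑ i, (if S k (σ i) (τ j) = 1 then (1:ℤ) else 0)) = (l:ℤ) := by
    intro k j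
    rw [Equiv.sum_comp σ (fun i => if S k i (τ j) = 1 then (1:ℤ) else 0)]
    rw [Finset.sum_boole]
    rw [(hS k).2.2 (τ j) 1 h1m]
  have hAA : ∀ k k' : Fin t, k ≠ k' →
      (∑ c : Fin (m*l) × Fin (m*l),
        (if S k (σ c.1) (τ c.2) = 1 then (1:ℤ) else 0) *
        (if S k' (σ c.1) (τ c.2) = 1 then (1:ℤ) else 0)) = (l:ℤ)*(l:ℤ) := by
    intro k k' hkk
    have e : ∀ c : Fin (m*l) × Fin (m*l),
        (if S k (σ c.1) (τ c.2) = 1 then (1:ℤ) else 0) *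
        (if S k' (σ c.1) (τ c.2) = 1 then (1:ℤ) else 0)
        = if (S k (σ c.1) (τ c.2) = 1 ∧ S k' (σ c.1) (τ c.2) = 1) then 1 else 0 := by
      intro c; split_ifs with h a b <;> simp_all
    simp_rw [e]
    rw [Fintype.sum_equiv (σ.prodCongr τ)
      (fun c : Fin (m*l) × Fin (m*l) =>
        if (S k (σ c.1) (τ c.2) = 1 ∧ S k' (σ c.1) (τ c.2) = 1) then (1:ℤ) else 0)
      (fun c : Fin (m*l) × Fin (m*l) =>
        if (S k c.1 c.2 = 1 ∧ S k' c.1 c.2 = 1) then (1:ℤ) else 0)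
      (by intro c; simp [Equiv.prodCongr_apply, Prod.map])]
    rw [Finset.sum_boole]
    rw [horth k k' hkk 1 1 h1m h1m]
    push_cast; ring
  have hAsq : ∀ k : Fin t,
      (∑ c : Fin (m*l) × Fin (m*l),
        (if S k (σ c.1) (τ c.2) = 1 then (1:ℤ) else 0) *
        (if S k (σ c.1) (τ c.2) = 1 then (1:ℤ) else 0)) = ((m:ℤ)*(l:ℤ))*(l:ℤ) := by
    intro k
    have e : ∀ c : Fin (m*l) × Fin (m*l),
        (if S k (σ c.1) (τ c.2) = 1 then (1:ℤ) else 0) *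
        (if S k (σ c.1) (τ c.2) = 1 then (1:ℤ) else 0)
        = if S k (σ c.1) (τ c.2) = 1 then (1:ℤ) else 0 := by
      intro c; split_ifs <;> norm_num
    simp_rw [e]
    rw [Fintype.sum_prod_type]
    simp_rw [hArow k]
    rw [Finset.sum_const, Finset.card_univ, Fintype.card_fin, nsmul_eq_mul]
    push_cast; ring
  have hTP' : ∀ c : Fin (m*l) × Fin (m*l),
      (2:ℤ) ∣ (∑ k, (if S k (σ c.1) (τ c.2) = 1 then (1:ℤ) else 0))
        - (if ((c.1:ℕ) < x ↔ (c.2:ℕ) < y) then 0 else 1) := by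
    intro c
    have hnat := hpar c.1 c.2
    have hbridge : ((∑ k, ind m l (S k) 1 (σ c.1) (τ c.2) : ℕ) : ℤ)
        = ∑ k, (if S k (σ c.1) (τ c.2) = 1 then (1:ℤ) else 0) := by
      simp only [ind]
      push_cast
      rfl
    rw [← hbridge]
    by_cases hc : ((c.1:ℕ) < x ↔ (c.2:ℕ) < y)
    · rw [if_pos hc] at hnat ⊢
      omega
    · rw [if_neg hc] at hnat ⊢
      omega
  exact main_abstract m l t x y hm hl hx hy hnc
    (fun k c => if S k (σ c.1) (τ c.2) = 1 then (1:ℤ) else 0)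
    hArow hAcol hAA hAsq hTP'
end

section
/- Let S_1,...,S_t be pairwise orthogonal frequency squares of type F(mλ;λ), let V = Σ_k I_1(S_k), and for each integer r let x_r denote the number of entries of V equal to r. Then Σ_r r·x_r = tmλ² and Σ_r r²·x_r = t(t−1)λ² + tmλ². -/
open Finset

theorem stmt15 (m l t : ℕ) (hm : 0 < m) (hl : 0 < l)
    (S : Fin t → Matrix (Fin (m*l)) (Fin (m*l)) ℕ)
    (hS : ∀ k, IsFS m l (S k))
    (horth : ∀ k k', k ≠ k' → Orth m l (S k) (S k'))
    (xr : ℕ → ℕ)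
    (hxr : ∀ r, xr r = (Finset.univ.filter
      (fun p : Fin (m*l) × Fin (m*l) => (∑ k, ind m l (S k) 1 p.1 p.2) = r)).card) :
    (∑ r ∈ Finset.range (t+1), r * xr r) = t * m * l^2 ∧
    (∑ r ∈ Finset.range (t+1), r^2 * xr r) = t * (t-1) * l^2 + t * m * l^2 := by
  have h1 : (1:ℕ) ∈ Finset.Icc 1 m := Finset.mem_Icc.mpr ⟨le_rfl, hm⟩
  set f : Fin (m*l) × Fin (m*l) → ℕ := fun p => ∑ k, ind m l (S k) 1 p.1 p.2 with hf
  have hfle : ∀ p, f p ≤ t := by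
    intro p
    calc f p ≤ ∑ _k : Fin t, 1 :=
          Finset.sum_le_sum (fun k _ => by unfold ind; split <;> simp)
      _ = t := by simp
  have key : ∀ g : ℕ → ℕ, (∑ r ∈ Finset.range (t+1), g r * xr r)
      = ∑ p : Fin (m*l) × Fin (m*l), g (f p) := by
    intro g
    have hfib := Finset.sum_fiberwise_of_maps_to (s := Finset.univ)
      (t := Finset.range (t+1)) (g := f)
      (fun p _ => Finset.mem_range.mpr (Nat.lt_succ_of_le (hfle p)))
      (fun p => g (f p))
    rw [← hfib]
    refine Finset.sum_congr rfl fun r _ => ?_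
    rw [hxr, Finset.sum_congr rfl (fun p hp => by rw [(Finset.mem_filter.mp hp).2]),
      Finset.sum_const, smul_eq_mul, mul_comm]
  have hcnt : ∀ k, (∑ p : Fin (m*l) × Fin (m*l), ind m l (S k) 1 p.1 p.2) = m*l*l := by
    intro k
    rw [Fintype.sum_prod_type]
    have hrow : ∀ i : Fin (m*l), (∑ j, ind m l (S k) 1 i j) = l := by
      intro i
      have hc := (hS k).2.1 i 1 h1
      rw [Finset.card_filter] at hc
      simpa only [ind] using hc
    simp only [hrow, Finset.sum_const, Finset.card_univ, Fintype.card_fin, smul_eq_mul]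
  have hpair : ∀ k k', k ≠ k' →
      (∑ p : Fin (m*l) × Fin (m*l), ind m l (S k) 1 p.1 p.2 * ind m l (S k') 1 p.1 p.2)
        = l*l := by
    intro k k' hkk
    have hc := horth k k' hkk 1 1 h1 h1
    rw [Finset.card_filter] at hc
    rw [← hc]
    refine Finset.sum_congr rfl fun p _ => ?_
    simp only [ind, ite_and]
    by_cases hA : S k p.1 p.2 = 1 <;> by_cases hB : S k' p.1 p.2 = 1 <;> simp [hA, hB]
  have hdiag : ∀ k,
      (∑ p : Fin (m*l) × Fin (m*l), ind m l (S k) 1 p.1 p.2 * ind m l (S k) 1 p.1 p.2)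
        = m*l*l := by
    intro k
    rw [← hcnt k]
    refine Finset.sum_congr rfl fun p _ => ?_
    simp only [ind]; split <;> simp
  constructor
  · have : (∑ r ∈ Finset.range (t+1), r * xr r) = ∑ p : Fin (m*l) × Fin (m*l), f p :=
      key id
    rw [this, hf]
    rw [Finset.sum_comm]
    simp only [hcnt, Finset.sum_const, Finset.card_univ, Fintype.card_fin, smul_eq_mul]
    ring
  · have : (∑ r ∈ Finset.range (t+1), r^2 * xr r)
        = ∑ p : Fin (m*l) × Fin (m*l), (f p)^2 := key (fun r => r^2)
    rw [this]
    have expand : ∀ p, (f p)^2 = ∑ k, ∑ k',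
        ind m l (S k) 1 p.1 p.2 * ind m l (S k') 1 p.1 p.2 := by
      intro p
      rw [sq, hf, Finset.sum_mul_sum]
    simp only [expand]
    rw [Finset.sum_comm]
    have inner : ∀ k : Fin t, (∑ p : Fin (m*l) × Fin (m*l), ∑ k',
        ind m l (S k) 1 p.1 p.2 * ind m l (S k') 1 p.1 p.2)
          = (t-1)*(l*l) + m*l*l := by
      intro k
      rw [Finset.sum_comm]
      rw [← Finset.sum_erase_add _ _ (Finset.mem_univ k)]
      have h2 : (∑ k' ∈ Finset.univ.erase k, ∑ p : Fin (m*l) × Fin (m*l),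
          ind m l (S k) 1 p.1 p.2 * ind m l (S k') 1 p.1 p.2) = (t-1)*(l*l) := by
        rw [Finset.sum_congr rfl (fun k' hk' =>
          hpair k k' (Ne.symm (Finset.ne_of_mem_erase hk')))]
        rw [Finset.sum_const, smul_eq_mul, Finset.card_erase_of_mem (Finset.mem_univ k),
          Finset.card_univ, Fintype.card_fin]
      rw [h2, hdiag k]
    simp only [inner, Finset.sum_const, Finset.card_univ, Fintype.card_fin, smul_eq_mul]
    ring
end
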